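/- arXiv:0803.0400 — 8 statements merged into one kernel-verified Lean document; each statement's English description precedes it below -/
import Mathlib

section
/- For all natural numbers i and j, the 3×3 determinant with first row C(i+j,i), C(i+j,i+1), C(i+j,i+2); second row C(i+j,i-1), C(i+j,i), C(i+j,i+1); third row C(i+j,i-2), C(i+j,i-1), C(i+j,i) equals 2·(i+j)!·(i+j+1)!·(i+j+2)! / (i!·(i+1)!·(i+2)!·j!·(j+1)!·(j+2)!). -/
/-- Binomial coefficient `C(n,k)` with integer lower index, 0 when `k < 0`. -/
noncomputable def binom (n : ℕ) (k : ℤ) : ℚ :=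
  if 0 ≤ k then (n.choose k.toNat : ℚ) else 0

theorem det_baxter (i j : ℕ) :
    Matrix.det !![binom (i+j) (i : ℤ), binom (i+j) ((i : ℤ)+1), binom (i+j) ((i : ℤ)+2);
                  binom (i+j) ((i : ℤ)-1), binom (i+j) (i : ℤ), binom (i+j) ((i : ℤ)+1);
                  binom (i+j) ((i : ℤ)-2), binom (i+j) ((i : ℤ)-1), binom (i+j) (i : ℤ)] =
      2 * (Nat.factorial (i+j) : ℚ) * (Nat.factorial (i+j+1)) * (Nat.factorial (i+j+2)) /
        ((Nat.factorial i) * (Nat.factorial (i+1)) * (Nat.factorial (i+2)) *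
         (Nat.factorial j) * (Nat.factorial (j+1)) * (Nat.factorial (j+2))) := by
  have hi1 : ((i:ℚ)+1) ≠ 0 := by positivity
  have hi2 : ((i:ℚ)+2) ≠ 0 := by positivity
  have hj1 : ((j:ℚ)+1) ≠ 0 := by positivity
  have hj2 : ((j:ℚ)+2) ≠ 0 := by positivity
  set n := i + j with hn
  set a : ℚ := (n.choose i : ℚ) with ha
  -- basic step relation
  have step : ∀ k : ℕ, (n.choose (k+1) : ℚ) * (k+1) = (n.choose k : ℚ) * (n - k) := by
    intro k
    have h := congrArg (fun x : ℕ => (x:ℚ)) (Nat.choose_succ_right_eq n k)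
    by_cases hk : k ≤ n
    · push_cast [Nat.cast_sub hk] at h
      linarith [h]
    · push_neg at hk
      rw [Nat.choose_eq_zero_of_lt (by omega), Nat.choose_eq_zero_of_lt (by omega)]
      push_cast; ring
  have e0 : binom n (i:ℤ) = a := by simp [binom, ha]
  have e1 : binom n ((i:ℤ)+1) = a * j / (i+1) := by
    have ht : ((i:ℤ)+1).toNat = i+1 := by omega
    have h := step i
    have hnj : ((n:ℚ) - i) = j := by rw [hn]; push_cast; ring
    rw [hnj] at h
    simp only [binom, if_pos (by omega : (0:ℤ) ≤ (i:ℤ)+1), ht]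
    field_simp
    linarith [h]
  have e2 : binom n ((i:ℤ)+2) = a * j * ((j:ℚ)-1) / ((i+1)*(i+2)) := by
    have ht : ((i:ℤ)+2).toNat = i+2 := by omega
    simp only [binom, if_pos (by omega : (0:ℤ) ≤ (i:ℤ)+2), ht]
    rcases Nat.eq_zero_or_pos j with hj | hj
    · subst hj
      rw [Nat.choose_eq_zero_of_lt (by omega)]
      simp [ha, hn]
    · have h := step (i+1)
      have h1 := step i
      have hnj : ((n:ℚ) - i) = j := by rw [hn]; push_cast; ring
      have hnj1 : ((n:ℚ) - (i+1)) = (j:ℚ) - 1 := by rw [hn]; push_cast; ring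
      rw [hnj] at h1
      push_cast at h
      rw [show ((n:ℚ) - (i+1)) = (j:ℚ) - 1 from hnj1] at h
      field_simp
      nlinarith [h, h1]
  have e3 : binom n ((i:ℤ)-1) = a * i / (j+1) := by
    match i, hn, ha with
    | 0, hn, ha => simp [binom]
    | (m+1), hn, ha =>
      have ht : ((m+1:ℕ):ℤ) - 1 = (m:ℤ) := by push_cast; ring
      rw [ht]
      simp only [binom, if_pos (Int.ofNat_nonneg m), Int.toNat_natCast]
      have h := step m
      have d : ((n:ℚ) - m) = (j:ℚ) + 1 := by rw [hn]; push_cast; ring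
      rw [d] at h
      rw [ha]
      push_cast
      field_simp
      linear_combination -h
  have e4 : binom n ((i:ℤ)-2) = a * i * ((i:ℚ)-1) / ((j+1)*(j+2)) := by
    match i, hn, ha with
    | 0, hn, ha => simp [binom]
    | 1, hn, ha => simp [binom]
    | (m+2), hn, ha =>
      have ht : ((m+2:ℕ):ℤ) - 2 = (m:ℤ) := by push_cast; ring
      rw [ht]
      simp only [binom, if_pos (Int.ofNat_nonneg m), Int.toNat_natCast]
      have h := step m
      have h1 := step (m+1)
      have d2 : ((n:ℚ) - m) = (j:ℚ) + 2 := by rw [hn]; push_cast; ring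
      have d1 : ((n:ℚ) - (m+1)) = (j:ℚ) + 1 := by rw [hn]; push_cast; ring
      rw [d2] at h
      push_cast at h1
      rw [show ((n:ℚ) - ((m:ℚ)+1)) = (j:ℚ) + 1 from d1] at h1
      rw [ha]
      push_cast
      field_simp
      linear_combination (-(j:ℚ)-1) * h + (-(m:ℚ)-1) * h1
  have hfac : (n.factorial : ℚ) = a * i.factorial * j.factorial := by
    have := Nat.choose_mul_factorial_mul_factorial (show i ≤ n by omega)
    have h2 : n - i = j := by omega
    rw [h2] at this
    rw [ha]
    exact_mod_cast this.symm
  rw [Matrix.det_fin_three]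
  try simp only [Matrix.of_apply, Matrix.cons_val', Matrix.cons_val_zero, Matrix.cons_val_one, Matrix.head_cons,
    Matrix.empty_val', Matrix.cons_val_fin_one, Matrix.head_fin_const, Matrix.cons_val_two,
    Matrix.tail_cons]
  rw [e0, e1, e2, e3, e4]
  rw [show n + 1 = (n+1) from rfl, show n + 2 = (n+2) from rfl,
    Nat.factorial_succ (n+1), Nat.factorial_succ n,
    Nat.factorial_succ (i+1), Nat.factorial_succ i,
    Nat.factorial_succ (j+1), Nat.factorial_succ j]
  push_cast
  rw [hfac]
  have hif : (i.factorial : ℚ) ≠ 0 := by positivity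
  have hjf : (j.factorial : ℚ) ≠ 0 := by positivity
  have hnn : (n:ℚ) = i + j := by rw [hn]; push_cast; ring
  rw [hnn]
  field_simp
  ring
end

section
/- For every natural number n, C_n·C_{n+2} − C_{n+1}² = 6·(2n)!·(2n+2)! / (n!·(n+1)!·(n+2)!·(n+3)!), where C_n is the n-th Catalan number. -/
/-!
Both sides are multiples of `C_n C_{n+1}`. The ratio recurrence
`(n + 2) C_{n+1} = 2 (2n + 1) C_n` gives
`C_n C_{n+2} - C_{n+1}² = C_n C_{n+1} (2(2n+3)/(n+3) - 2(2n+1)/(n+2)) = 6 C_n C_{n+1} / ((n+2)(n+3))`,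
and the factorial formula for `C_n` and `C_{n+1}` turns this into the right-hand side.
-/

open Nat

theorem succ_succ_mul_catalan_succ (n : ℕ) :
    (n + 2) * catalan (n + 1) = 2 * (2 * n + 1) * catalan n := by
  apply Nat.eq_of_mul_eq_mul_left n.succ_pos
  calc (n + 1) * ((n + 2) * catalan (n + 1))
      = (n + 1) * centralBinom (n + 1) := by
        rw [← succ_mul_catalan_eq_centralBinom, mul_left_comm]
    _ = 2 * (2 * n + 1) * centralBinom n := succ_mul_centralBinom_succ n
    _ = (n + 1) * (2 * (2 * n + 1) * catalan n) := by
        rw [← succ_mul_catalan_eq_centralBinom]; ring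

theorem catalan_mul_factorial_mul_factorial_succ (n : ℕ) :
    catalan n * n ! * (n + 1)! = (2 * n)! :=
  calc catalan n * n ! * (n + 1)! = centralBinom n * n ! * n ! := by
        rw [← succ_mul_catalan_eq_centralBinom, factorial_succ]; ring
    _ = (2 * n)! := by
        simpa [centralBinom, two_mul] using choose_mul_factorial_mul_factorial (n.le_add_left n)

theorem catalan_eq_factorial_div {K : Type*} [Field K] [CharZero K] (n : ℕ) :
    (catalan n : K) = (2 * n)! / (n ! * (n + 1)!) := by
  rw [eq_div_iff (by norm_cast; positivity), ← mul_assoc]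
  exact_mod_cast catalan_mul_factorial_mul_factorial_succ n

theorem catalan_mul_catalan_add_two_sub_sq {K : Type*} [Field K] [CharZero K] (n : ℕ) :
    (catalan n : K) * catalan (n + 2) - catalan (n + 1) ^ 2 =
      6 * catalan n * catalan (n + 1) / ((n + 2) * (n + 3)) := by
  have h₁ : ((n : K) + 2) * catalan (n + 1) = 2 * (2 * n + 1) * catalan n := by
    exact_mod_cast succ_succ_mul_catalan_succ n
  have h₂ : ((n : K) + 3) * catalan (n + 2) = 2 * (2 * n + 3) * catalan (n + 1) := by
    exact_mod_cast succ_succ_mul_catalan_succ (n + 1)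
  rw [eq_div_iff (by norm_cast)]
  linear_combination (n + 2 : K) * catalan n * h₂ - (n + 3 : K) * catalan (n + 1) * h₁

theorem catalan_diff_formula (n : ℕ) :
    (catalan n : ℚ) * (catalan (n+2)) - (catalan (n+1))^2 =
      6 * (Nat.factorial (2*n) : ℚ) * (Nat.factorial (2*n+2)) /
        ((Nat.factorial n) * (Nat.factorial (n+1)) * (Nat.factorial (n+2)) *
         (Nat.factorial (n+3))) := by
  rw [catalan_mul_catalan_add_two_sub_sq, catalan_eq_factorial_div, catalan_eq_factorial_div,
    show 2 * (n + 1) = 2 * n + 2 by ring, factorial_succ (n + 2), factorial_succ (n + 1)]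
  push_cast
  field_simp
  ring
end

section
/- The number 2·(i+j)!·(i+j+1)!·(i+j+2)! / (i!·(i+1)!·(i+2)!·j!·(j+1)!·(j+2)!) is a positive integer for all natural numbers i, j. -/
/-!
The quotient is MacMahon's number of plane partitions in an `i × j × 3` box. By
Lindström–Gessel–Viennot it equals the Toeplitz determinant `det (C(i+j, i+r-s))_{0 ≤ r,s < 3}`,
which is an integer; once every entry is written as `(i+j)!/((i+2)! (j+2)!)` times a polynomial
in `i, j`, the identity between the determinant and the quotient is a polynomial identity.
-/

open Nat

lemma cast_add_choose_mul_factorial_mul_factorial (a b : ℕ) :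
    ((a + b).choose a : ℚ) * a ! * b ! = (a + b)! := by
  rw [Nat.choose_symm_add]
  exact_mod_cast Nat.add_choose_mul_factorial_mul_factorial a b

lemma cast_add_choose_mul_factorial_add_two (i j : ℕ) :
    ((i + j).choose i : ℚ) * (i + 2)! * (j + 2)! =
      (i + j)! * ((i + 1) * (i + 2) * (j + 1) * (j + 2)) := by
  push_cast [Nat.factorial_succ]
  linear_combination ((i + 1) * (i + 2) * (j + 1) * (j + 2) : ℚ) *
    cast_add_choose_mul_factorial_mul_factorial i j

lemma cast_add_choose_succ_mul_factorial_add_two (i j : ℕ) :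
    ((i + j).choose (i + 1) : ℚ) * (i + 2)! * (j + 2)! =
      (i + j)! * ((i + 2) * j * (j + 1) * (j + 2)) := by
  rcases j with _ | b
  · simp
  · have h := cast_add_choose_mul_factorial_mul_factorial (i + 1) b
    rw [show i + (b + 1) = i + 1 + b by ring]
    push_cast [Nat.factorial_succ] at h ⊢
    linear_combination ((i + 2) * (b + 1) * (b + 2) * (b + 3) : ℚ) * h

lemma cast_add_choose_add_two_mul_factorial_add_two (i j : ℕ) :
    ((i + j).choose (i + 2) : ℚ) * (i + 2)! * (j + 2)! =
      (i + j)! * ((j - 1) * j * (j + 1) * (j + 2)) := by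
  rcases j with _ | _ | b
  · simp [Nat.choose_eq_zero_of_lt]
  · simp
  · have h := cast_add_choose_mul_factorial_mul_factorial (i + 2) b
    rw [show i + (b + 2) = i + 2 + b by ring]
    push_cast [Nat.factorial_succ] at h ⊢
    linear_combination ((b + 1) * (b + 2) * (b + 3) * (b + 4) : ℚ) * h

/-- Entry `(r, s)` is `C(i+j, i+r-s)`, with `C(i+j, i-k)` written as `C(i+j, j+k)` so that it
vanishes for `k > i` instead of being read at a truncated index. -/
def binomialToeplitz (i j : ℕ) : Matrix (Fin 3) (Fin 3) ℤ :=
  !![((i + j).choose i : ℤ), (i + j).choose (j + 1), (i + j).choose (j + 2);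
     (i + j).choose (i + 1), (i + j).choose i, (i + j).choose (j + 1);
     (i + j).choose (i + 2), (i + j).choose (i + 1), (i + j).choose i]

theorem cast_det_binomialToeplitz (i j : ℕ) :
    ((binomialToeplitz i j).det : ℚ) =
      2 * (i + j)! * (i + j + 1)! * (i + j + 2)! /
        (i ! * (i + 1)! * (i + 2)! * j ! * (j + 1)! * (j + 2)!) := by
  set F : ℚ := (i + j)! / ((i + 2)! * (j + 2)!)
  have scale : ∀ c p : ℚ, c * (i + 2)! * (j + 2)! = (i + j)! * p → c = F * p := by
    intro c p h
    rw [div_mul_eq_mul_div, eq_div_iff (by positivity), ← h]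
    ring
  have h0 := scale _ _ (cast_add_choose_mul_factorial_add_two i j)
  have hi1 := scale _ _ (cast_add_choose_succ_mul_factorial_add_two i j)
  have hi2 := scale _ _ (cast_add_choose_add_two_mul_factorial_add_two i j)
  have hj1 : ((i + j).choose (j + 1) : ℚ) = F * ((j + 2) * i * (i + 1) * (i + 2)) :=
    scale _ _ (by
      rw [mul_right_comm, add_comm i j]
      exact cast_add_choose_succ_mul_factorial_add_two j i)
  have hj2 : ((i + j).choose (j + 2) : ℚ) = F * ((i - 1) * i * (i + 1) * (i + 2)) :=
    scale _ _ (by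
      rw [mul_right_comm, add_comm i j]
      exact cast_add_choose_add_two_mul_factorial_add_two j i)
  simp only [binomialToeplitz, Matrix.det_fin_three, Fin.isValue, Matrix.of_apply, Matrix.cons_val',
    Matrix.cons_val_zero, Matrix.cons_val_fin_one, Matrix.cons_val_one, Matrix.cons_val, Int.cast_sub,
    Int.cast_add, Int.cast_mul, Int.cast_natCast]
  rw [h0, hi1, hi2, hj1, hj2, eq_div_iff (by positivity)]
  push_cast [F, Nat.factorial_succ]
  field_simp
  ring

theorem baxter_formula_posint (i j : ℕ) :
    ∃ m : ℕ, 0 < m ∧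
      (m : ℚ) = 2 * (Nat.factorial (i+j) : ℚ) * (Nat.factorial (i+j+1)) * (Nat.factorial (i+j+2)) /
        ((Nat.factorial i) * (Nat.factorial (i+1)) * (Nat.factorial (i+2)) *
         (Nat.factorial j) * (Nat.factorial (j+1)) * (Nat.factorial (j+2))) := by
  have hdet := cast_det_binomialToeplitz i j
  have hpos : 0 < (binomialToeplitz i j).det := by
    have : (0 : ℚ) < (binomialToeplitz i j).det := by rw [hdet]; positivity
    exact_mod_cast this
  refine ⟨(binomialToeplitz i j).det.toNat, by omega, ?_⟩
  rw [← hdet]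
  exact_mod_cast Int.toNat_of_nonneg hpos.le
end

section
/- Let W be a word over the alphabet {a, ā, b, b̄} in which letters from {a,ā} occupy exactly the odd positions and letters from {b,b̄} occupy exactly the even positions, and suppose W is a balanced parenthesis word when a,b are read as opening and ā,b̄ as closing parentheses. Then for every k, if the k-th occurrence of ā exists, the number of a's to its left is strictly greater than the number of b̄'s to the left of the k-th occurrence of b. -/
/-- The alphabet `{a, ā, b, b̄}`. -/
inductive Letter : Type
  | a | abar | b | bbar
  deriving DecidableEq

/-- Opening letters are `a` and `b`. -/
def Letter.isOpen : Letter → Bool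
  | .a => true
  | .b => true
  | _ => false

/-- The prefix of a word consisting of the letters strictly before the
`k`-th occurrence of `y` (1-indexed). -/
def takeUntilNth {α : Type*} [DecidableEq α] (y : α) : ℕ → List α → List α
  | _, [] => []
  | k, z :: t =>
    if z = y then (if k ≤ 1 then [] else z :: takeUntilNth y (k-1) t)
    else z :: takeUntilNth y k t

/-!
Let `p` be the (0-indexed) position of the `k`-th `ā` and `P = W.take p`. As `W[p] = ā`,
`p` is even, so `P` holds `p/2` letters of each of `{a, ā}` and `{b, b̄}`, and `P` has
`k - 1` letters `ā`. The Dyck condition for `P ++ [ā]` reads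
`k + #b̄ ≤ #a + #b`, which together with `#a + k - 1 = p/2 = #b + #b̄` gives both
`#b̄ < #a` and `k ≤ #b`. The latter puts the `k`-th `b` inside `P`, so the prefix before it
has at most as many `b̄` as `P`.
-/

theorem List.countP_eq_count_add_count {α : Type*} [DecidableEq α] {f : α → Bool} {u v : α}
    (huv : u ≠ v) (hf : ∀ x, f x ↔ x = u ∨ x = v) (l : List α) :
    l.countP f = l.count u + l.count v := by
  induction l with
  | nil => rfl
  | cons x l ih =>
    rw [countP_cons, count_cons, count_cons, ih]
    by_cases hu : x = u
    · subst hu; simp [hf, huv]; omega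
    · by_cases hv : x = v
      · subst hv; simp [hf, hu]; omega
      · simp [hf, hu, hv]

theorem List.countP_take_of_alternating {α : Type*} {l : List α} {f : α → Bool}
    (hf : ∀ i (hi : i < l.length), f l[i] = decide (i % 2 = 0)) {t : ℕ} (ht : t ≤ l.length) :
    (l.take t).countP f = (t + 1) / 2 := by
  induction t with
  | zero => simp
  | succ t ih =>
    rw [take_succ_eq_append_getElem ht, countP_append, ih (by omega), countP_singleton,
      hf t ht]
    rcases Nat.mod_two_eq_zero_or_one t with h | h <;> simp [h] <;> omega

theorem List.countP_not_take_of_alternating {α : Type*} {l : List α} {f : α → Bool}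
    (hf : ∀ i (hi : i < l.length), f l[i] = decide (i % 2 = 0)) {t : ℕ} (ht : t ≤ l.length) :
    (l.take t).countP (fun x => !f x) = t / 2 := by
  have hsplit : (l.take t).length = (l.take t).countP f + (l.take t).countP (fun x => !f x) := by
    simpa using length_eq_countP_add_countP f (l := l.take t)
  rw [length_take_of_le ht, countP_take_of_alternating hf ht] at hsplit
  omega

theorem exists_takeUntilNth_eq_take {α : Type*} [DecidableEq α] (y : α) (l : List α) {k : ℕ}
    (hk1 : 1 ≤ k) (hk : k ≤ l.count y) :
    ∃ n, ∃ hn : n < l.length, l[n] = y ∧ takeUntilNth y k l = l.take n ∧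
      (l.take n).count y = k - 1 := by
  induction l generalizing k with
  | nil => simp at hk; omega
  | cons z l ih =>
    by_cases hz : z = y
    · subst hz
      by_cases hk1' : k ≤ 1
      · exact ⟨0, by simp, rfl, by simp [takeUntilNth, hk1'], by simp; omega⟩
      · obtain ⟨n, hn, hny, heq, hcount⟩ :=
          ih (k := k - 1) (by omega) (by rw [List.count_cons_self] at hk; omega)
        refine ⟨n + 1, by simpa using hn, hny, by simp [takeUntilNth, hk1', heq], ?_⟩
        simp [List.count_cons_self, hcount]; omega
    · obtain ⟨n, hn, hny, heq, hcount⟩ := ih hk1 (by rwa [List.count_cons_of_ne hz] at hk)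
      exact ⟨n + 1, by simpa using hn, hny, by simp [takeUntilNth, hz, heq],
        by simp [List.count_cons_of_ne hz, hcount]⟩

def Letter.isA : Letter → Bool
  | .a => true
  | .abar => true
  | _ => false

theorem Letter.countP_isOpen (l : List Letter) :
    l.countP Letter.isOpen = l.count .a + l.count .b :=
  List.countP_eq_count_add_count (by decide) (fun x => by cases x <;> decide) l

theorem Letter.countP_not_isOpen (l : List Letter) :
    l.countP (fun x => !x.isOpen) = l.count .abar + l.count .bbar :=
  List.countP_eq_count_add_count (by decide) (fun x => by cases x <;> decide) l

theorem Letter.countP_isA (l : List Letter) :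
    l.countP Letter.isA = l.count .a + l.count .abar :=
  List.countP_eq_count_add_count (by decide) (fun x => by cases x <;> decide) l

theorem Letter.countP_not_isA (l : List Letter) :
    l.countP (fun x => !x.isA) = l.count .b + l.count .bbar :=
  List.countP_eq_count_add_count (by decide) (fun x => by cases x <;> decide) l

theorem Letter.isA_getElem_of_alternating (W : List Letter)
    (halt : ∀ p : ℕ, p < W.length →
      ((p % 2 = 0 → W.getD p .a = .a ∨ W.getD p .a = .abar) ∧
       (p % 2 = 1 → W.getD p .a = .b ∨ W.getD p .a = .bbar)))
    (i : ℕ) (hi : i < W.length) : W[i].isA = decide (i % 2 = 0) := by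
  have h := halt i hi
  rw [List.getD_eq_getElem W .a hi] at h
  rcases Nat.mod_two_eq_zero_or_one i with hi2 | hi2
  · rcases h.1 hi2 with hw | hw <;> simp [hw, hi2, Letter.isA]
  · rcases h.2 hi2 with hw | hw <;> simp [hw, hi2, Letter.isA]

theorem alternating_dyck_strict_general (W : List Letter)
    (halt : ∀ p : ℕ, p < W.length →
      ((p % 2 = 0 → W.getD p .a = .a ∨ W.getD p .a = .abar) ∧
       (p % 2 = 1 → W.getD p .a = .b ∨ W.getD p .a = .bbar)))
    (hpre : ∀ t : ℕ, (W.take t).countP (fun l => ! l.isOpen) ≤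
      (W.take t).countP (fun l => l.isOpen))
    (k : ℕ) (hk1 : 1 ≤ k) (hk : k ≤ W.count Letter.abar) :
    (takeUntilNth Letter.b k W).count Letter.bbar <
      (takeUntilNth Letter.abar k W).count Letter.a := by
  obtain ⟨p, hp, hpy, hpeq, hpcount⟩ := exists_takeUntilNth_eq_take .abar W hk1 hk
  have hisA := Letter.isA_getElem_of_alternating W halt
  have hp_even : p % 2 = 0 := by simpa [hpy, Letter.isA] using hisA p hp
  have hA : (W.take p).count .a + (W.take p).count .abar = (p + 1) / 2 := by
    rw [← Letter.countP_isA]; exact List.countP_take_of_alternating hisA hp.le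
  have hB : (W.take p).count .b + (W.take p).count .bbar = p / 2 := by
    rw [← Letter.countP_not_isA]; exact List.countP_not_take_of_alternating hisA hp.le
  have hdyck : (W.take p).count .abar + (W.take p).count .bbar + 1 ≤
      (W.take p).count .a + (W.take p).count .b := by
    have := hpre (p + 1)
    rwa [List.take_succ_eq_append_getElem hp, hpy, List.countP_append, List.countP_append,
      Letter.countP_isOpen, Letter.countP_not_isOpen] at this
  have hkb : k ≤ (W.take p).count .b := by omega
  obtain ⟨q, -, -, hqeq, hqcount⟩ := exists_takeUntilNth_eq_take .b W hk1
    (hkb.trans ((W.take_sublist p).count_le _))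
  have hqp : q ≤ p := by
    by_contra! h
    have := (List.take_prefix_take_left (l := W) h.le).count_le Letter.b
    omega
  have hbbar := (List.take_prefix_take_left (l := W) hqp).count_le Letter.bbar
  rw [hpeq, hqeq]
  omega

/-- If `W` has letters of `{a,ā}` exactly at odd positions (1-indexed) and letters
of `{b,b̄}` exactly at even positions, and `W` is a balanced parenthesis word
(`a`, `b` opening, `ā`, `b̄` closing), then for every `k` such that the `k`-th `ā`
exists, the number of `a`'s to its left is strictly greater than the number of
`b̄`'s to the left of the `k`-th `b`. -/
theorem alternating_dyck_strict (W : List Letter)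
    (halt : ∀ p : ℕ, p < W.length →
      ((p % 2 = 0 → W.getD p .a = .a ∨ W.getD p .a = .abar) ∧
       (p % 2 = 1 → W.getD p .a = .b ∨ W.getD p .a = .bbar)))
    (hbal : W.countP (fun l => l.isOpen) = W.countP (fun l => ! l.isOpen))
    (hpre : ∀ t : ℕ, (W.take t).countP (fun l => ! l.isOpen) ≤
      (W.take t).countP (fun l => l.isOpen))
    (k : ℕ) (hk1 : 1 ≤ k) (hk : k ≤ W.count Letter.abar) :
    (takeUntilNth Letter.b k W).count Letter.bbar <
      (takeUntilNth Letter.abar k W).count Letter.a :=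
  alternating_dyck_strict_general W halt hpre k hk1 hk
end

section
/- Conversely to the previous statement: let W_a be a word with p letters a and q letters ā, let W_b be a word with q letters b and p letters b̄, and let W be the word obtained by interlacing W_a and W_b (letters of W_a at odd positions, letters of W_b at even positions, preserving order). If for every k with 1 ≤ k ≤ q the number of a's to the left of the k-th ā in W_a is strictly greater than the number of b̄'s to the left of the k-th b in W_b, then W is a balanced parenthesis word (with a,b opening and ā,b̄ closing). -/
/-- Interlacing of two words: `u₁ v₁ u₂ v₂ ⋯`. -/
def interlace {α : Type*} : List α → List α → List α
  | [], v => v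
  | x :: u, v => x :: interlace v u
  termination_by u v => u.length + v.length

/-!
Split a prefix of `interlace Wa Wb` into its letters `u` from `Wa` and `v` from `Wb`, so that
`|v| ≤ |u| ≤ |v| + 1`. The hypothesis forces `#ā(u) ≤ #b(v)`: otherwise, for `k = #ā(u)`, the
word `v` ends before the `k`-th `b` of `Wb` while `u` reaches past the `k`-th `ā` of `Wa`, so
`#b̄(v) < #a(u)`, which together with `#ā(u) > #b(v)` contradicts `|u| ≤ |v| + 1`. Adding
`#ā(u) ≤ #b(v)` to `|v| ≤ |u|` gives `#ā(u) + #b̄(v) ≤ #a(u) + #b(v)`.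
-/

namespace List

theorem count_add_count_eq_length {α : Type*} [DecidableEq α] {x y : α} (hxy : x ≠ y) {l : List α}
    (hl : ∀ z ∈ l, z = x ∨ z = y) : l.count x + l.count y = l.length := by
  rw [length_eq_countP_add_countP (· == x), count_eq_countP, count_eq_countP]
  congr 1
  refine countP_congr fun z hz => ?_
  rcases hl z hz with rfl | rfl <;> simp [hxy, hxy.symm]

end List

theorem interlace_perm {α : Type*} : ∀ u v : List α, (interlace u v).Perm (u ++ v)
  | [], v => by simp [interlace]
  | x :: u, v => by
    simp only [interlace, List.cons_append]
    exact ((interlace_perm v u).trans List.perm_append_comm).cons x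
  termination_by u v => u.length + v.length

theorem take_interlace {α : Type*} :
    ∀ {u v : List α} (t : ℕ), v.length ≤ u.length → u.length ≤ v.length + 1 →
      (interlace u v).take t = interlace (u.take ((t + 1) / 2)) (v.take (t / 2))
  | [], v, t, h₁, _ => by
    rw [List.length_eq_zero_iff.mp (Nat.le_zero.mp h₁)]
    simp [interlace]
  | x :: u, v, 0, _, _ => by simp [interlace]
  | x :: u, v, s + 1, h₁, h₂ => by
    have hs : (s + 1 + 1) / 2 = s / 2 + 1 := by omega
    rw [hs, List.take_succ_cons, interlace, interlace, List.take_succ_cons,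
      take_interlace s (by simpa using h₂) (by simpa using h₁)]
  termination_by u v => u.length + v.length

section takeUntilNth

variable {α : Type*} [DecidableEq α] {y : α}

theorem take_prefix_takeUntilNth :
    ∀ {l : List α} {n k : ℕ}, (l.take n).count y < k → l.take n <+: takeUntilNth y k l
  | [], _, _, _ => by simp
  | _ :: _, 0, _, _ => by simp
  | z :: l, n + 1, k, h => by
    rw [List.take_succ_cons, List.count_cons] at h
    rw [List.take_succ_cons, takeUntilNth]
    by_cases hz : z = y
    · rw [if_pos hz, if_neg (by simp [hz] at h; omega), List.cons_prefix_cons]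
      exact ⟨rfl, take_prefix_takeUntilNth (by simp [hz] at h; omega)⟩
    · rw [if_neg hz, List.cons_prefix_cons]
      exact ⟨rfl, take_prefix_takeUntilNth (by simpa [hz] using h)⟩

theorem takeUntilNth_prefix_take :
    ∀ {l : List α} {n k : ℕ}, 1 ≤ k → k ≤ (l.take n).count y → takeUntilNth y k l <+: l.take n
  | [], _, _, _, h => by simp at h; omega
  | _ :: _, 0, _, _, h => by simp at h; omega
  | z :: l, n + 1, k, hk, h => by
    rw [List.take_succ_cons, List.count_cons] at h
    rw [List.take_succ_cons, takeUntilNth]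
    by_cases hz : z = y
    · rw [if_pos hz]
      by_cases hk1 : k ≤ 1
      · rw [if_pos hk1]
        exact List.nil_prefix
      · rw [if_neg hk1, List.cons_prefix_cons]
        exact ⟨rfl, takeUntilNth_prefix_take (by omega) (by simp [hz] at h; omega)⟩
    · rw [if_neg hz, List.cons_prefix_cons]
      exact ⟨rfl, takeUntilNth_prefix_take hk (by simpa [hz] using h)⟩

end takeUntilNth

theorem count_take_le_count_take {α : Type*} [DecidableEq α] {x x' y y' : α}
    (hx : x ≠ x') (hy : y ≠ y') {u v : List α}
    (hu : ∀ z ∈ u, z = x ∨ z = x') (hv : ∀ z ∈ v, z = y ∨ z = y')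
    (hlen : u.length ≤ v.length + 1)
    (hcond : ∀ k, 1 ≤ k → k ≤ u.count x' →
      (takeUntilNth y k v).count y' < (takeUntilNth x' k u).count x)
    {m n : ℕ} (hmn : m ≤ n + 1) :
    (u.take m).count x' ≤ (v.take n).count y := by
  by_contra! hlt
  set i := (u.take m).count x'
  have hi : 1 ≤ i := by omega
  have hiu : i ≤ u.count x' := (u.take_sublist m).count_le x'
  have hy' : (v.take n).count y' ≤ (takeUntilNth y i v).count y' :=
    (take_prefix_takeUntilNth hlt).count_le y'
  have hx' : (takeUntilNth x' i u).count x ≤ (u.take m).count x :=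
    (takeUntilNth_prefix_take hi le_rfl).count_le x
  have hum : (u.take m).count x + i = min m u.length := by
    rw [← List.length_take]
    exact List.count_add_count_eq_length hx fun z hz => hu z (List.mem_of_mem_take hz)
  have hvn : (v.take n).count y + (v.take n).count y' = min n v.length := by
    rw [← List.length_take]
    exact List.count_add_count_eq_length hy fun z hz => hv z (List.mem_of_mem_take hz)
  have hgap := hcond i hi hiu
  omega

theorem Letter.countP_isOpen_eq_count {o c : Letter} (ho : o.isOpen = true)
    (hc : c.isOpen = false) {l : List Letter} (hl : ∀ z ∈ l, z = o ∨ z = c) :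
    l.countP (·.isOpen) = l.count o ∧ l.countP (! ·.isOpen) = l.count c := by
  have hoc : o ≠ c := by rintro rfl; simp [ho] at hc
  constructor <;> refine List.countP_congr fun z hz => ?_ <;>
    rcases hl z hz with rfl | rfl <;> simp [ho, hc, hoc, hoc.symm]

theorem Letter.countP_not_isOpen_append_le_countP_isOpen {u v : List Letter}
    (hu : ∀ z ∈ u, z = .a ∨ z = .abar) (hv : ∀ z ∈ v, z = .b ∨ z = .bbar)
    (hlen : v.length ≤ u.length) (hcount : u.count .abar ≤ v.count .b) :
    (u ++ v).countP (! ·.isOpen) ≤ (u ++ v).countP (·.isOpen) := by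
  obtain ⟨huOpen, huClose⟩ := countP_isOpen_eq_count rfl rfl hu
  obtain ⟨hvOpen, hvClose⟩ := countP_isOpen_eq_count rfl rfl hv
  have hu' := List.count_add_count_eq_length (by decide : Letter.a ≠ .abar) hu
  have hv' := List.count_add_count_eq_length (by decide : Letter.b ≠ .bbar) hv
  simp only [List.countP_append, huOpen, huClose, hvOpen, hvClose]
  omega

/-- If `W_a` has `p` `a`'s and `q` `ā`'s, `W_b` has `q` `b`'s and `p` `b̄`'s, and for
every `1 ≤ k ≤ q` the number of `a`'s left of the `k`-th `ā` in `W_a` is strictly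
greater than the number of `b̄`'s left of the `k`-th `b` in `W_b`, then the
interlacing of `W_a` and `W_b` is a balanced parenthesis word. -/
theorem interlace_dyck (p q : ℕ) (Wa Wb : List Letter)
    (haAlpha : ∀ l ∈ Wa, l = Letter.a ∨ l = Letter.abar)
    (hbAlpha : ∀ l ∈ Wb, l = Letter.b ∨ l = Letter.bbar)
    (ha1 : Wa.count Letter.a = p) (ha2 : Wa.count Letter.abar = q)
    (hb1 : Wb.count Letter.b = q) (hb2 : Wb.count Letter.bbar = p)
    (hcond : ∀ k : ℕ, 1 ≤ k → k ≤ q →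
      (takeUntilNth Letter.b k Wb).count Letter.bbar <
        (takeUntilNth Letter.abar k Wa).count Letter.a) :
    ((interlace Wa Wb).countP (fun l => l.isOpen) =
        (interlace Wa Wb).countP (fun l => ! l.isOpen)) ∧
      (∀ t : ℕ, ((interlace Wa Wb).take t).countP (fun l => ! l.isOpen) ≤
        ((interlace Wa Wb).take t).countP (fun l => l.isOpen)) := by
  have hWa := List.count_add_count_eq_length (by decide : Letter.a ≠ .abar) haAlpha
  have hWb := List.count_add_count_eq_length (by decide : Letter.b ≠ .bbar) hbAlpha
  have hlen₁ : Wb.length ≤ Wa.length := by omega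
  have hlen₂ : Wa.length ≤ Wb.length + 1 := by omega
  constructor
  · obtain ⟨hWaOpen, hWaClose⟩ := Letter.countP_isOpen_eq_count rfl rfl haAlpha
    obtain ⟨hWbOpen, hWbClose⟩ := Letter.countP_isOpen_eq_count rfl rfl hbAlpha
    rw [(interlace_perm Wa Wb).countP_eq, (interlace_perm Wa Wb).countP_eq, List.countP_append,
      List.countP_append, hWaOpen, hWaClose, hWbOpen, hWbClose]
    omega
  · intro t
    rw [take_interlace t hlen₁ hlen₂, (interlace_perm _ _).countP_eq,
      (interlace_perm _ _).countP_eq]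
    refine Letter.countP_not_isOpen_append_le_countP_isOpen
      (fun z hz => haAlpha z (List.mem_of_mem_take hz))
      (fun z hz => hbAlpha z (List.mem_of_mem_take hz)) ?_ ?_
    · simp only [List.length_take]
      omega
    · exact count_take_le_count_take (by decide) (by decide) haAlpha hbAlpha hlen₂
        (ha2 ▸ hcond) (by omega)
end

section
/- The number of triples (P₁,P₂,P₃) of pairwise non-intersecting upright lattice paths in ℤ², with P₁ from (−1,1) to (i−1,j+1), P₂ from (0,0) to (i,j), and P₃ from (1,−1) to (i+1,j−1), equals 2·(i+j)!·(i+j+1)!·(i+j+2)! / (i!·(i+1)!·(i+2)!·j!·(j+1)!·(j+2)!), for all natural numbers i, j. -/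
/-!
Encode a path by its word of steps. Since the start points lie on an antidiagonal, two paths can
only meet after equally many steps, so the paths are non-intersecting iff after every number `t`
of steps their right-step counts are ordered: a path cannot overtake its neighbour without meeting
it. Sorting the nested families of `k` words by their last steps gives a transfer recursion in
the final right-step counts `x`. The Lindström–Gessel–Viennot determinant
`det (binom n (x a + a - r))` satisfies the same recursion by Pascal's rule and multilinearity,
vanishes on the boundary `x a = x (a + 1) + 1` where two of its columns coincide, and has the same
initial values. For three paths each entry is `(i + j)! / ((i + 2)! (j + 2)!)` times a polynomial
in `i` and `j`, which evaluates the determinant.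
-/

/-- The set of lattice points visited by the upright path starting at `A`
with step word `w` (`false` = right step, `true` = up step). -/
def visited (A : ℤ × ℤ) (w : List Bool) : Set (ℤ × ℤ) :=
  {p | ∃ t ≤ w.length,
    p = (A.1 + ((w.take t).count false : ℤ), A.2 + ((w.take t).count true : ℤ))}

open Finset

namespace NonintersectingPaths

def rightSteps (w : List Bool) (t : ℕ) : ℕ := (w.take t).count false

def Nested {k : ℕ} (w : Fin k → List Bool) : Prop :=
  ∀ t, Monotone fun a => rightSteps (w a) t

def rightStep : Bool → ℤ
  | false => 1
  | true => 0

lemma rightSteps_of_length_le {w : List Bool} {t : ℕ} (h : w.length ≤ t) :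
    rightSteps w t = w.count false := by
  rw [rightSteps, List.take_of_length_le h]

lemma rightSteps_concat_of_le {w : List Bool} {t : ℕ} (b : Bool) (h : t ≤ w.length) :
    rightSteps (w.concat b) t = rightSteps w t := by
  rw [rightSteps, rightSteps, List.concat_eq_append, List.take_append_of_le_length h]

lemma rightSteps_succ_le (w : List Bool) (t : ℕ) :
    rightSteps w (t + 1) ≤ rightSteps w t + 1 := by
  rw [rightSteps, rightSteps, List.take_add_one, List.count_append]
  gcongr
  rcases w[t]? with _ | _ | _ <;> simp

lemma rightSteps_le_succ (w : List Bool) (t : ℕ) : rightSteps w t ≤ rightSteps w (t + 1) := by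
  rw [rightSteps, rightSteps, List.take_add_one, List.count_append]
  exact Nat.le_add_right _ _

lemma count_false_concat (w : List Bool) (b : Bool) :
    ((w.concat b).count false : ℤ) = w.count false + rightStep b := by
  cases b <;> simp [rightStep]

variable {k n : ℕ}

/-- `rightSteps w - rightSteps v` starts at `0` and grows by at most one per step, so it cannot
become positive without passing through `1`. -/
lemma rightSteps_le_of_forall_ne {w v : List Bool}
    (h : ∀ t ≤ n, rightSteps w t ≠ rightSteps v t + 1) :
    ∀ t ≤ n, rightSteps w t ≤ rightSteps v t
  | 0, _ => by simp [rightSteps]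
  | t + 1, ht => by
    have := rightSteps_le_of_forall_ne h t (by omega)
    have := rightSteps_succ_le w t
    have := rightSteps_le_succ v t
    have := h (t + 1) ht
    omega

lemma nested_iff_forall_le {w : Fin k → List Bool} (hw : ∀ a, (w a).length = n) :
    Nested w ↔ ∀ t ≤ n, Monotone fun a => rightSteps (w a) t := by
  refine ⟨fun h t _ => h t, fun h t => ?_⟩
  rcases le_total t n with ht | ht
  · exact h t ht
  · simpa only [rightSteps_of_length_le ((hw _).trans_le ht),
      rightSteps_of_length_le (hw _).le] using h n le_rfl

lemma nested_concat_iff {w : Fin k → List Bool} (hw : ∀ a, (w a).length = n)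
    (b : Fin k → Bool) :
    Nested (fun a => (w a).concat (b a)) ↔
      Nested w ∧ Monotone fun a => ((w a).concat (b a)).count false := by
  have hwb : ∀ a, ((w a).concat (b a)).length = n + 1 := by simp [hw]
  rw [nested_iff_forall_le hw, nested_iff_forall_le hwb]
  have hle : ∀ t ≤ n,
      (fun a => rightSteps ((w a).concat (b a)) t) = fun a => rightSteps (w a) t :=
    fun t ht => funext fun a => rightSteps_concat_of_le _ ((hw a).symm ▸ ht)
  have hlast : (fun a => rightSteps ((w a).concat (b a)) (n + 1)) =
      fun a => ((w a).concat (b a)).count false :=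
    funext fun a => rightSteps_of_length_le (hwb a).le
  constructor
  · intro h
    exact ⟨fun t ht => hle t ht ▸ h t (by omega), hlast ▸ h (n + 1) le_rfl⟩
  · rintro ⟨h, hn⟩ t ht
    rcases Nat.le_succ_iff.1 ht with ht | rfl
    · exact hle t ht ▸ h t ht
    · exact hlast ▸ hn

/-- Built by appending a last step to each word, which gives the transfer recursion for its
cardinality; `mem_nestedFamilies` says what it contains. -/
noncomputable def nestedFamilies : ℕ → (Fin k → ℤ) → Finset (Fin k → List Bool)
  | 0, x => if x = 0 then {fun _ => []} else ∅
  | n + 1, x =>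
    open Classical in
    if Monotone x then
      (univ : Finset (Fin k → Bool)).biUnion fun b =>
        (nestedFamilies n (x - rightStep ∘ b)).image fun w a => (w a).concat (b a)
    else ∅

lemma mem_nestedFamilies_zero {x : Fin k → ℤ} {w : Fin k → List Bool} :
    w ∈ nestedFamilies 0 x ↔
      (∀ a, (w a).length = 0) ∧ (∀ a, ((w a).count false : ℤ) = x a) ∧ Nested w := by
  simp only [nestedFamilies, List.length_eq_zero_iff]
  split_ifs with hx
  · subst hx
    simp only [mem_singleton, funext_iff]
    constructor
    · rintro hw
      simp [hw, Nested, rightSteps, monotone_const]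
    · exact fun h a => h.1 a
  · simp only [notMem_empty, false_iff]
    rintro ⟨hw, hx', -⟩
    exact hx (funext fun a => by simp [← hx' a, hw a])

lemma mem_nestedFamilies {x : Fin k → ℤ} {w : Fin k → List Bool} :
    w ∈ nestedFamilies n x ↔
      (∀ a, (w a).length = n) ∧ (∀ a, ((w a).count false : ℤ) = x a) ∧ Nested w := by
  induction n generalizing x w with
  | zero => exact mem_nestedFamilies_zero
  | succ n ih =>
    rw [nestedFamilies]
    split_ifs with hx
    · simp only [mem_biUnion, mem_univ, true_and, mem_image, ih]
      constructor
      · rintro ⟨b, v, ⟨hv, hvx, hnest⟩, rfl⟩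
        have hcount : ∀ a, (((v a).concat (b a)).count false : ℤ) = x a := fun a => by
          rw [count_false_concat, hvx]; simp
        refine ⟨fun a => by simp [hv a], hcount, (nested_concat_iff hv b).2 ⟨hnest, ?_⟩⟩
        intro a a' haa'
        exact_mod_cast (hcount a).trans_le ((hx haa').trans (hcount a').ge)
      · rintro ⟨hw, hwx, hnest⟩
        have hsplit : ∀ a, ∃ v : List Bool, ∃ β : Bool, w a = v.concat β := fun a => by
          rcases List.eq_nil_or_concat (w a) with h | h
          · simpa [h] using hw a
          · exact h
        choose v b hvb using hsplit
        obtain rfl : w = fun a => (v a).concat (b a) := funext hvb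
        have hv : ∀ a, (v a).length = n := fun a => by simpa using hw a
        refine ⟨b, v, ⟨hv, fun a => ?_, ((nested_concat_iff hv b).1 hnest).1⟩, rfl⟩
        have := hwx a
        rw [count_false_concat] at this
        simp only [Pi.sub_apply, Function.comp_apply]
        omega
    · simp only [notMem_empty, false_iff]
      rintro ⟨hw, hwx, hnest⟩
      refine hx fun a a' haa' => ?_
      have := hnest (n + 1) haa'
      simp only [rightSteps_of_length_le (hw _).le] at this
      rw [← hwx, ← hwx]
      exact_mod_cast this

lemma card_nestedFamilies_succ {x : Fin k → ℤ} (hx : Monotone x) :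
    #(nestedFamilies (n + 1) x) =
      ∑ b : Fin k → Bool, #(nestedFamilies n (x - rightStep ∘ b)) := by
  rw [nestedFamilies, if_pos hx, card_biUnion]
  · refine sum_congr rfl fun b _ => card_image_of_injective _ fun v v' h => funext fun a => ?_
    simpa using congrFun h a
  · intro b _ b' _ hbb'
    simp only [Function.onFun, disjoint_left, mem_image, not_exists, not_and]
    rintro _ ⟨v, -, rfl⟩ v' - h
    refine hbb' (funext fun a => ?_)
    have : (v' a).concat (b' a) = (v a).concat (b a) := congrFun h a
    simp only [List.concat_eq_append, List.append_singleton_inj] at this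
    exact this.2.symm

def binom (n : ℕ) (m : ℤ) : ℤ := if 0 ≤ m then n.choose m.toNat else 0

lemma binom_zero_left (m : ℤ) : binom 0 m = if m = 0 then 1 else 0 := by
  unfold binom
  rcases lt_trichotomy m 0 with hm | rfl | hm
  · simp [hm.not_ge, hm.ne]
  · simp
  · simp [hm.le, hm.ne', Nat.choose_eq_zero_of_lt, hm]

lemma binom_succ (n : ℕ) (m : ℤ) :
    binom (n + 1) m = ∑ β : Bool, binom n (m - rightStep β) := by
  simp only [Fintype.sum_bool, rightStep, sub_zero]
  unfold binom
  rcases lt_trichotomy m 0 with hm | rfl | hm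
  · rw [if_neg (by omega), if_neg (by omega), if_neg (by omega), add_zero]
  · simp
  · obtain ⟨l, rfl⟩ : ∃ l : ℕ, m = l + 1 := ⟨m.toNat - 1, by omega⟩
    simp only [show (0 : ℤ) ≤ l + 1 by omega, show (0 : ℤ) ≤ l + 1 - 1 by omega, if_true,
      show ((l : ℤ) + 1).toNat = l + 1 by omega, show ((l : ℤ) + 1 - 1).toNat = l by omega,
      Nat.choose_succ_succ', Nat.cast_add]
    ring

lemma _root_.Matrix.det_of_sum_row {ι α R : Type*} [Fintype ι] [DecidableEq ι] [Fintype α]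
    [CommRing R] (g : ι → α → ι → R) :
    (Matrix.of fun i j => ∑ β, g i β j).det =
      ∑ r : ι → α, (Matrix.of fun i j => g i (r i) j).det := by
  convert (Matrix.detRowAlternating : (ι → R) [⋀^ι]→ₗ[R] R).toMultilinearMap.map_sum g
    using 1
  · congr 1
    ext i j
    simp [Finset.sum_apply]
  · rfl

/-- The entry in row `r` and column `a` counts the paths of length `n` from the `r`-th start point
`(r, -r)` to the `a`-th end point `(x a + a, n - x a - a)`. -/
def lgvDet (n : ℕ) (x : Fin k → ℤ) : ℤ :=
  (Matrix.of fun r a : Fin k => binom n (x a + a - r)).det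

lemma lgvDet_succ (n : ℕ) (x : Fin k → ℤ) :
    lgvDet (n + 1) x = ∑ b : Fin k → Bool, lgvDet n (x - rightStep ∘ b) := by
  have hT : ∀ (m : ℕ) (y : Fin k → ℤ),
      lgvDet m y = (Matrix.of fun a r : Fin k => binom m (y a + a - r)).det :=
    fun m y => (Matrix.det_transpose _).symm
  simp only [hT, binom_succ, Matrix.det_of_sum_row]
  refine sum_congr rfl fun b _ => ?_
  congr 1
  ext a r
  simp only [Matrix.of_apply, Pi.sub_apply, Function.comp_apply]
  ring_nf

lemma lgvDet_eq_zero_of_succ_eq (n : ℕ) {x : Fin (k + 1) → ℤ} {a : Fin k}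
    (h : x a.castSucc = x a.succ + 1) : lgvDet n x = 0 :=
  Matrix.det_zero_of_column_eq (Fin.castSucc_lt_succ (i := a)).ne fun r => by
    simp only [Matrix.of_apply, h, Fin.val_succ, Fin.val_castSucc]
    push_cast
    ring_nf

lemma lgvDet_zero {x : Fin k → ℤ} (hx : Monotone fun a => x a + a) :
    lgvDet 0 x = if x = 0 then 1 else 0 := by
  split_ifs with h0
  · subst h0
    have : (Matrix.of fun r a : Fin k => binom 0 ((0 : Fin k → ℤ) a + a - r)) = 1 := by
      ext r a
      simp [binom_zero_left, Matrix.one_apply, sub_eq_zero, eq_comm, Fin.val_inj]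
    rw [lgvDet, this, Matrix.det_one]
  by_contra hdet
  -- column `a` is the unit vector at `x a + a`
  have hcol : ∀ a, ∃ r : Fin k, x a + a = r := by
    intro a
    by_contra! h
    exact hdet (Matrix.det_eq_zero_of_column_eq_zero a fun r => by
      simp [binom_zero_left, sub_eq_zero, h])
  choose f hf using hcol
  have hinj : Function.Injective f := by
    intro a a' h
    by_contra hne
    exact hdet (Matrix.det_zero_of_column_eq hne fun r => by simp [hf, h])
  have hmono : Monotone f := fun a a' h => by
    have := hx h
    simp only [hf, Nat.cast_le] at this
    exact this
  have hid : f = id := ((hmono.strictMono_of_injective hinj).range_inj strictMono_id).1 <| by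
    rw [Set.range_id]
    exact (Finite.injective_iff_surjective.1 hinj).range_eq
  exact h0 (funext fun a => by simpa [hid] using hf a)

/-- The hypothesis says `x a ≤ x (a + 1) + 1`: it survives one step of the recursion from a
monotone `x`, and on its boundary `x a = x (a + 1) + 1` there is no nested family while the
determinant vanishes. -/
theorem card_nestedFamilies (n : ℕ) {x : Fin (k + 1) → ℤ} (hx : Monotone fun a => x a + a) :
    (#(nestedFamilies n x) : ℤ) = lgvDet n x := by
  induction n generalizing x with
  | zero =>
    rw [lgvDet_zero hx, nestedFamilies]
    split_ifs <;> simp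
  | succ n ih =>
    by_cases hmono : Monotone x
    · rw [card_nestedFamilies_succ hmono, lgvDet_succ]
      push_cast
      refine sum_congr rfl fun b _ => ih fun a a' h => ?_
      obtain rfl | hlt := h.eq_or_lt
      · exact le_rfl
      have hxa := hmono h
      have hval : (a : ℤ) + 1 ≤ a' := by exact_mod_cast hlt
      simp only [Pi.sub_apply, Function.comp_apply]
      cases b a <;> cases b a' <;> simp only [rightStep] <;> omega
    · rw [nestedFamilies, if_neg hmono]
      obtain ⟨a, ha⟩ : ∃ a : Fin k, x a.succ < x a.castSucc := by
        simpa [Fin.monotone_iff_le_succ] using hmono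
      have := hx (Fin.castSucc_lt_succ (i := a)).le
      simp only [Fin.val_succ, Fin.val_castSucc] at this
      push_cast at this
      rw [lgvDet_eq_zero_of_succ_eq _ (show x a.castSucc = x a.succ + 1 by linarith)]
      simp

lemma mem_visited {A p : ℤ × ℤ} {w : List Bool} :
    p ∈ visited A w ↔
      ∃ t ≤ w.length, p = (A.1 + rightSteps w t, A.2 + t - rightSteps w t) := by
  refine exists_congr fun t => and_congr_right fun ht => ?_
  have := List.count_false_add_count_true (w.take t)
  rw [List.length_take, min_eq_left ht] at this
  rw [rightSteps, show ((w.take t).count true : ℤ) = t - (w.take t).count false by omega,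
    add_sub_assoc]

/-- Two paths with start points on a common antidiagonal can only meet after the same number
of steps. -/
lemma visited_inter_eq_empty_iff {A B : ℤ × ℤ} (hAB : A.1 + A.2 = B.1 + B.2) {w v : List Bool}
    (hwv : w.length = v.length) :
    visited A w ∩ visited B v = ∅ ↔
      ∀ t ≤ w.length, A.1 + rightSteps w t ≠ B.1 + rightSteps v t := by
  simp only [Set.eq_empty_iff_forall_notMem, Set.mem_inter_iff, mem_visited]
  constructor
  · rintro h t ht heq
    exact h _ ⟨⟨t, ht, rfl⟩, t, hwv ▸ ht, by ext <;> simp only <;> omega⟩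
  · rintro h p ⟨⟨t, ht, rfl⟩, s, hs, hp⟩
    simp only [Prod.mk.injEq] at hp
    obtain rfl : t = s := by omega
    exact h t ht hp.1

lemma nested_iff_visited_disjoint {u v w : List Bool} (hu : u.length = n)
    (hv : v.length = n) (hw : w.length = n) :
    Nested ![u, v, w] ↔
      visited (-1, 1) u ∩ visited (0, 0) v = ∅ ∧
        visited (-1, 1) u ∩ visited (1, -1) w = ∅ ∧ visited (0, 0) v ∩ visited (1, -1) w = ∅ := by
  have hlen : ∀ a, (![u, v, w] a).length = n := by simp [Fin.forall_fin_succ, hu, hv, hw]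
  rw [nested_iff_forall_le hlen, visited_inter_eq_empty_iff (by norm_num) (hu.trans hv.symm),
    visited_inter_eq_empty_iff (by norm_num) (hu.trans hw.symm),
    visited_inter_eq_empty_iff (by norm_num) (hv.trans hw.symm), hu, hv]
  simp only [Fin.monotone_iff_le_succ, Fin.forall_fin_two, Fin.castSucc_zero, Fin.castSucc_one,
    Fin.succ_zero_eq_one, Fin.succ_one_eq_two, Matrix.cons_val, zero_add, ne_eq]
  constructor
  · intro h
    refine ⟨fun t ht => ?_, fun t ht => ?_, fun t ht => ?_⟩ <;> have := h t ht <;> omega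
  · rintro ⟨h₁, -, h₂⟩ t ht
    exact ⟨rightSteps_le_of_forall_ne (fun t ht => by have := h₁ t ht; omega) t ht,
      rightSteps_le_of_forall_ne (fun t ht => by have := h₂ t ht; omega) t ht⟩

lemma vecCons_mem_nestedFamilies_iff {i j : ℕ} {u v w : List Bool} :
    ![u, v, w] ∈ nestedFamilies (i + j) (fun _ => (i : ℤ)) ↔
      u.count false = i ∧ u.count true = j ∧ v.count false = i ∧ v.count true = j ∧
        w.count false = i ∧ w.count true = j ∧
        visited (-1, 1) u ∩ visited (0, 0) v = ∅ ∧
        visited (-1, 1) u ∩ visited (1, -1) w = ∅ ∧ visited (0, 0) v ∩ visited (1, -1) w = ∅ := by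
  have hlen : ∀ x : List Bool, x.count false = i → x.count true = j → x.length = i + j :=
    fun x h₁ h₂ => by rw [← List.count_false_add_count_true, h₁, h₂]
  have hcount : ∀ x : List Bool, x.length = i + j ∧ (x.count false : ℤ) = i ↔
      x.count false = i ∧ x.count true = j := fun x => by
    have := List.count_false_add_count_true x
    omega
  rw [mem_nestedFamilies, ← and_assoc, ← forall_and, Fin.forall_fin_succ, Fin.forall_fin_two]
  simp only [Matrix.cons_val_zero, Matrix.cons_val_succ, Matrix.cons_val_one, hcount, and_assoc]
  constructor
  · rintro ⟨hu, hu', hv, hv', hw, hw', hnest⟩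
    exact ⟨hu, hu', hv, hv', hw, hw',
      (nested_iff_visited_disjoint (hlen u hu hu') (hlen v hv hv') (hlen w hw hw')).1 hnest⟩
  · rintro ⟨hu, hu', hv, hv', hw, hw', hdisj⟩
    exact ⟨hu, hu', hv, hv', hw, hw',
      (nested_iff_visited_disjoint (hlen u hu hu') (hlen v hv hv') (hlen w hw hw')).2 hdisj⟩

lemma ncard_setOf_vecCons_mem {α : Type*} (s : Finset (Fin 3 → α)) :
    {T : α × α × α | ![T.1, T.2.1, T.2.2] ∈ s}.ncard = #s := by
  rw [← Set.ncard_coe_finset]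
  refine Set.ncard_preimage_of_injective_subset_range (fun T T' h => ?_)
    fun f _ => ⟨(f 0, f 1, f 2), ?_⟩
  · simpa [Prod.ext_iff] using h
  · ext a
    fin_cases a <;> rfl

open Nat in
lemma binom_mul_factorial_mul_factorial (i j h k : ℕ) (hk : k ≤ 2 * h) :
    binom (i + j) (i + k - h) * (i + h)! * (j + h)! =
      (i + j)! * (i + h).descFactorial (2 * h - k) * (j + h).descFactorial k := by
  unfold binom
  by_cases hi : i + k < h
  · rw [if_neg (by omega), (descFactorial_eq_zero_iff_lt).2 (by omega)]
    simp
  by_cases hj : j + h < k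
  · rw [if_pos (by omega), (descFactorial_eq_zero_iff_lt).2 hj,
      choose_eq_zero_of_lt (by omega)]
    simp
  obtain ⟨m, hm⟩ : ∃ m : ℕ, (i : ℤ) + k - h = m := ⟨i + k - h, by omega⟩
  rw [hm, if_pos (Int.natCast_nonneg m), Int.toNat_natCast]
  have hi' := factorial_mul_descFactorial (n := i + h) (k := 2 * h - k) (by omega)
  have hj' := factorial_mul_descFactorial (n := j + h) (k := k) (by omega)
  have hc := choose_mul_factorial_mul_factorial (n := i + j) (k := m) (by omega)
  rw [show i + h - (2 * h - k) = m by omega] at hi'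
  rw [show j + h - k = i + j - m by omega] at hj'
  rw [← hi', ← hj', ← hc]
  push_cast
  ring

open Nat in
lemma lgvDet_const_three (i j : ℕ) :
    (lgvDet (i + j) (fun _ : Fin 3 => (i : ℤ)) : ℚ) =
      2 * ((i + j)! : ℚ) * (i + j + 1)! * (i + j + 2)! /
        (i ! * (i + 1)! * (i + 2)! * j ! * (j + 1)! * (j + 2)!) := by
  set c : ℚ := (i + j)! / ((i + 2)! * (j + 2)!)
  have entry : ∀ k : ℕ, k ≤ 4 → (binom (i + j) (i + k - 2) : ℚ) =
      c * ((descPochhammer ℚ (4 - k)).eval ((i + 2 : ℕ) : ℚ) *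
        (descPochhammer ℚ k).eval ((j + 2 : ℕ) : ℚ)) := fun k hk => by
    rw [descPochhammer_eval_eq_descFactorial, descPochhammer_eval_eq_descFactorial]
    have := binom_mul_factorial_mul_factorial i j 2 k hk
    rw [show 2 * 2 - k = 4 - k by omega] at this
    simp only [c]
    rw [div_mul_eq_mul_div, eq_div_iff (by positivity)]
    rw [← mul_assoc, ← mul_assoc]
    exact_mod_cast this
  have hM : (Int.castRingHom ℚ).mapMatrix
      (Matrix.of fun r a : Fin 3 => binom (i + j) ((fun _ => (i : ℤ)) a + a - r)) =
      c • Matrix.of fun r a : Fin 3 =>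
        (descPochhammer ℚ (4 - (a + 2 - r))).eval ((i + 2 : ℕ) : ℚ) *
          (descPochhammer ℚ (a + 2 - r)).eval ((j + 2 : ℕ) : ℚ) := by
    ext r a
    rw [RingHom.mapMatrix_apply, Matrix.map_apply, Matrix.of_apply, Matrix.smul_apply,
      Matrix.of_apply, smul_eq_mul, eq_intCast, ← entry _ (by omega)]
    congr 2
    simp only
    omega
  rw [lgvDet, ← eq_intCast (Int.castRingHom ℚ), RingHom.map_det, hM, Matrix.det_smul,
    Matrix.det_fin_three]
  simp [descPochhammer_succ_eval, c, factorial_succ]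
  field_simp
  ring

end NonintersectingPaths

/-- The number of triples of pairwise non-intersecting upright lattice paths from
`(-1,1)`, `(0,0)`, `(1,-1)` to `(i-1,j+1)`, `(i,j)`, `(i+1,j-1)` is Baxter's number
`2 (i+j)! (i+j+1)! (i+j+2)! / (i! (i+1)! (i+2)! j! (j+1)! (j+2)!)`. -/
theorem count_nonintersecting_triples (i j : ℕ) :
    ({T : List Bool × List Bool × List Bool |
        T.1.count false = i ∧ T.1.count true = j ∧
        T.2.1.count false = i ∧ T.2.1.count true = j ∧
        T.2.2.count false = i ∧ T.2.2.count true = j ∧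
        visited ((-1 : ℤ), (1 : ℤ)) T.1 ∩ visited ((0 : ℤ), (0 : ℤ)) T.2.1 = ∅ ∧
        visited ((-1 : ℤ), (1 : ℤ)) T.1 ∩ visited ((1 : ℤ), (-1 : ℤ)) T.2.2 = ∅ ∧
        visited ((0 : ℤ), (0 : ℤ)) T.2.1 ∩ visited ((1 : ℤ), (-1 : ℤ)) T.2.2 = ∅}.ncard : ℚ) =
      2 * (Nat.factorial (i+j) : ℚ) * (Nat.factorial (i+j+1)) * (Nat.factorial (i+j+2)) /
        ((Nat.factorial i) * (Nat.factorial (i+1)) * (Nat.factorial (i+2)) *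
         (Nat.factorial j) * (Nat.factorial (j+1)) * (Nat.factorial (j+2))) := by
  open NonintersectingPaths in
  have hx : Monotone fun a : Fin 3 => (fun _ => (i : ℤ)) a + a := fun a b h => by simpa using h
  rw [← lgvDet_const_three, ← card_nestedFamilies (i + j) hx, Int.cast_natCast,
    ← ncard_setOf_vecCons_mem]
  congr 3
  ext ⟨u, v, w⟩
  exact vecCons_mem_nestedFamilies_iff.symm
end

section
/- (Lindström–Gessel–Viennot for upright paths, 3×3 case.) Let A₁=(−1,1), A₂=(0,0), A₃=(1,−1) and B₁=(i−1,j+1), B₂=(i,j), B₃=(i+1,j−1) with i,j ≥ 0. Any triple of pairwise non-intersecting upright lattice paths joining {A₁,A₂,A₃} to {B₁,B₂,B₃} must connect A_p to B_p for each p, and the number of such non-intersecting triples equals det(M), where M_{pq} is the number of upright lattice paths from A_p to B_q. -/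
/-- Endpoint of the upright path starting at `A` with step word `w`. -/
def endpoint (A : ℤ × ℤ) (w : List Bool) : ℤ × ℤ :=
  (A.1 + (w.count false : ℤ), A.2 + (w.count true : ℤ))

/-- Number of upright lattice paths from `A` to `B` (as an integer). -/
def pathNum (A B : ℤ × ℤ) : ℤ :=
  if 0 ≤ B.1 - A.1 ∧ 0 ≤ B.2 - A.2 then
    (Nat.choose ((B.1 - A.1) + (B.2 - A.2)).toNat (B.1 - A.1).toNat : ℤ)
  else 0

/-!
All start points lie on one antidiagonal `x + y = c`, so after `t` steps every path sits on
`x + y = c + t`, and two paths share a point only if they are there at the same time. Expanding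
`det M` over permutations counts signed path systems `(σ, w)`, path `p` running from `A p` to
`B (σ p)`. On the intersecting systems, exchanging the tails of two paths at their first collision
is a sign-reversing involution, so only non-intersecting systems survive. These have `σ = 1`: if
`p < q` but `σ q < σ p`, the horizontal gap between paths `p` and `q` starts negative, ends
nonnegative and grows by at most one per step, so it vanishes at some time.
-/

open Finset Function

namespace UprightPath

def words : ℕ → Finset (List Bool)
  | 0 => {[]}
  | m + 1 => (words m).image (List.cons false) ∪ (words m).image (List.cons true)

@[simp]
lemma mem_words {m : ℕ} {l : List Bool} : l ∈ words m ↔ l.length = m := by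
  induction m generalizing l with
  | zero => simp [words]
  | succ m ih =>
    cases l with
    | nil => simp [words]
    | cons b l => cases b <;> simp [words, ih]

lemma card_words_count_false (m k : ℕ) : #{l ∈ words m | l.count false = k} = m.choose k := by
  induction m generalizing k with
  | zero => cases k <;> simp [words, filter_singleton]
  | succ m ih =>
    have hdisj : Disjoint ((words m).image (List.cons false)) ((words m).image (List.cons true)) :=
      by simp [disjoint_left]
    rw [words, filter_union, card_union_of_disjoint (hdisj.mono (filter_subset _ _)
      (filter_subset _ _)), filter_image, filter_image,
      card_image_of_injective _ List.cons_injective, card_image_of_injective _ List.cons_injective]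
    cases k with
    | zero => simp [ih 0]
    | succ k => simp [ih, Nat.choose_succ_succ']

@[simp]
lemma endpoint_nil (A : ℤ × ℤ) : endpoint A [] = A := by simp [endpoint]

lemma endpoint_append (A : ℤ × ℤ) (u v : List Bool) :
    endpoint A (u ++ v) = endpoint (endpoint A u) v := by
  simp only [endpoint, List.count_append, Nat.cast_add, add_assoc]

lemma endpoint_fst_add_snd (A : ℤ × ℤ) (w : List Bool) :
    (endpoint A w).1 + (endpoint A w).2 = A.1 + A.2 + w.length := by
  have := List.count_false_add_count_true w
  simp only [endpoint]
  omega

lemma endpoint_fst_le (A : ℤ × ℤ) (w : List Bool) : (endpoint A w).1 ≤ A.1 + w.length := by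
  have := List.count_false_add_count_true w
  simp only [endpoint]
  omega

lemma le_endpoint_fst (A : ℤ × ℤ) (w : List Bool) : A.1 ≤ (endpoint A w).1 := by
  simp [endpoint]

lemma mem_visited {A P : ℤ × ℤ} {w : List Bool} :
    P ∈ visited A w ↔ ∃ t ≤ w.length, endpoint A (w.take t) = P := by
  simp only [visited, endpoint, Set.mem_ofPred_eq, eq_comm]

def paths (m : ℕ) (A B : ℤ × ℤ) : Finset (List Bool) := {w ∈ words m | endpoint A w = B}

lemma mem_paths {m : ℕ} {A B : ℤ × ℤ} (h : B.1 + B.2 = A.1 + A.2 + m) {w : List Bool} :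
    w ∈ paths m A B ↔ endpoint A w = B := by
  refine ⟨fun hw => (mem_filter.1 hw).2, fun hw => mem_filter.2 ⟨?_, hw⟩⟩
  have := endpoint_fst_add_snd A w
  rw [hw] at this
  simp only [mem_words]
  omega

lemma card_paths {m : ℕ} {A B : ℤ × ℤ} (h : B.1 + B.2 = A.1 + A.2 + m) :
    (#(paths m A B) : ℤ) = pathNum A B := by
  have hiff : ∀ w ∈ words m, endpoint A w = B ↔ (w.count false : ℤ) = B.1 - A.1 := by
    intro w hw
    have := List.count_false_add_count_true w
    rw [mem_words] at hw
    simp only [endpoint, Prod.ext_iff]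
    omega
  rw [paths, filter_congr hiff, pathNum]
  split_ifs with hpos
  · obtain ⟨k, hk⟩ := Int.eq_ofNat_of_zero_le hpos.1
    have hm : (B.1 - A.1 + (B.2 - A.2)).toNat = m := by omega
    rw [hm, hk, Int.toNat_natCast]
    simp only [Nat.cast_inj, card_words_count_false]
  · rw [filter_false_of_mem, card_empty, Nat.cast_zero]
    intro w hw hcount
    have := List.count_false_add_count_true w
    rw [mem_words] at hw
    omega

lemma visited_inter_nonempty_iff {A A' : ℤ × ℤ} (hA : A.1 + A.2 = A'.1 + A'.2)
    {u v : List Bool} :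
    (visited A u ∩ visited A' v).Nonempty ↔
      ∃ t ≤ u.length, t ≤ v.length ∧ endpoint A (u.take t) = endpoint A' (v.take t) := by
  constructor
  · rintro ⟨P, hPu, hPv⟩
    obtain ⟨s, hs, rfl⟩ := mem_visited.1 hPu
    obtain ⟨t, ht, hst⟩ := mem_visited.1 hPv
    have hsum := congrArg (fun P : ℤ × ℤ => P.1 + P.2) hst
    simp only [endpoint_fst_add_snd, List.length_take] at hsum
    obtain rfl : t = s := by omega
    exact ⟨t, hs, ht, hst.symm⟩
  · rintro ⟨t, htu, htv, heq⟩
    exact ⟨_, mem_visited.2 ⟨t, htu, rfl⟩, mem_visited.2 ⟨t, htv, heq.symm⟩⟩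

lemma exists_eq_zero_of_le_add_one {d : ℕ → ℤ} (hstep : ∀ t, d (t + 1) ≤ d t + 1)
    (h0 : d 0 ≤ 0) {n : ℕ} (hn : 0 ≤ d n) : ∃ t ≤ n, d t = 0 := by
  induction n with
  | zero => exact ⟨0, le_rfl, by omega⟩
  | succ n ih =>
    rcases hn.lt_or_eq with hpos | hzero
    · obtain ⟨t, ht, hdt⟩ := ih (by linarith [hstep n])
      exact ⟨t, ht.trans n.le_succ, hdt⟩
    · exact ⟨n + 1, le_rfl, hzero.symm⟩

lemma endpoint_take_succ_fst_le (A : ℤ × ℤ) (w : List Bool) (t : ℕ) :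
    (endpoint A (w.take (t + 1))).1 ≤ (endpoint A (w.take t)).1 + 1 := by
  rw [List.take_add_one, endpoint_append]
  refine (endpoint_fst_le _ _).trans ?_
  cases w[t]? <;> simp

lemma endpoint_take_fst_le_succ (A : ℤ × ℤ) (w : List Bool) (t : ℕ) :
    (endpoint A (w.take t)).1 ≤ (endpoint A (w.take (t + 1))).1 := by
  rw [List.take_add_one, endpoint_append]
  exact le_endpoint_fst _ _

lemma exists_endpoint_take_eq_of_cross {A A' : ℤ × ℤ} (hA : A.1 + A.2 = A'.1 + A'.2)
    {u v : List Bool} (huv : u.length = v.length) (h0 : A.1 ≤ A'.1)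
    (h1 : (endpoint A' v).1 ≤ (endpoint A u).1) :
    ∃ t ≤ u.length, endpoint A (u.take t) = endpoint A' (v.take t) := by
  set d : ℕ → ℤ := fun t => (endpoint A (u.take t)).1 - (endpoint A' (v.take t)).1
  have hstep : ∀ t, d (t + 1) ≤ d t + 1 := fun t => by
    linarith [endpoint_take_succ_fst_le A u t, endpoint_take_fst_le_succ A' v t]
  have hend : 0 ≤ d u.length := by
    simp only [d, List.take_length, huv ▸ List.take_length (l := v)]
    linarith
  obtain ⟨t, ht, hdt⟩ := exists_eq_zero_of_le_add_one hstep (by simpa [d]) hend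
  refine ⟨t, ht, Prod.ext (by linarith) ?_⟩
  have hu := endpoint_fst_add_snd A (u.take t)
  have hv := endpoint_fst_add_snd A' (v.take t)
  simp only [List.length_take, ← huv] at hu hv
  linarith

section FirstCollision

variable {ι α : Type*}

open Classical in
noncomputable def firstCollisionTime (f : ℕ → ι → α) : ℕ :=
  if h : ∃ t, ¬ Injective (f t) then Nat.find h else 0

variable {f g : ℕ → ι → α}

lemma not_injective_firstCollisionTime (h : ∃ t, ¬ Injective (f t)) :
    ¬ Injective (f (firstCollisionTime f)) := by
  classical
  rw [firstCollisionTime, dif_pos h]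
  exact Nat.find_spec h

lemma firstCollisionTime_le {t : ℕ} (ht : ¬ Injective (f t)) : firstCollisionTime f ≤ t := by
  classical
  rw [firstCollisionTime, dif_pos ⟨t, ht⟩]
  exact Nat.find_min' _ ht

lemma firstCollisionTime_congr (h : ∃ t, ¬ Injective (f t))
    (hfg : ∀ s ≤ firstCollisionTime f, g s = f s) :
    firstCollisionTime g = firstCollisionTime f := by
  have hf := not_injective_firstCollisionTime h
  have hg : ∃ t, ¬ Injective (g t) := ⟨_, hfg _ le_rfl ▸ hf⟩
  refine le_antisymm (firstCollisionTime_le (hfg _ le_rfl ▸ hf)) (not_lt.1 fun hlt => ?_)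
  have hgt := not_injective_firstCollisionTime hg
  rw [hfg _ hlt.le] at hgt
  exact (firstCollisionTime_le hgt).not_gt hlt

variable [DecidableEq ι]

open Classical in
noncomputable def collisionSwap (f : ι → α) : Equiv.Perm ι :=
  if h : ∃ p q, f p = f q ∧ p ≠ q then Equiv.swap h.choose h.choose_spec.choose else 1

lemma collisionSwap_spec {f : ι → α} (h : ¬ Injective f) :
    ∃ p q, f p = f q ∧ p ≠ q ∧ collisionSwap f = Equiv.swap p q := by
  classical
  have h' := not_injective_iff.1 h
  exact ⟨_, _, h'.choose_spec.choose_spec.1, h'.choose_spec.choose_spec.2, dif_pos h'⟩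

lemma collisionSwap_involutive (f : ι → α) : Involutive (collisionSwap f) := by
  unfold collisionSwap
  split_ifs
  exacts [Equiv.swap_apply_self _ _, fun _ => rfl]

lemma apply_collisionSwap (f : ι → α) (r : ι) : f (collisionSwap f r) = f r := by
  by_cases h : Injective f
  · rw [collisionSwap, dif_neg fun ⟨p, q, hpq, hne⟩ => hne (h hpq), Equiv.Perm.one_apply]
  · obtain ⟨p, q, hpq, -, hswap⟩ := collisionSwap_spec h
    rw [hswap]
    rcases eq_or_ne r p with rfl | hrp
    · rw [Equiv.swap_apply_left, hpq]
    rcases eq_or_ne r q with rfl | hrq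
    · rw [Equiv.swap_apply_right, hpq]
    · rw [Equiv.swap_apply_of_ne_of_ne hrp hrq]

end FirstCollision

section Tracks

variable {ι : Type*} (A : ι → ℤ × ℤ)

def track (w : ι → List Bool) (t : ℕ) : ι → ℤ × ℤ := fun r => endpoint (A r) ((w r).take t)

def NonIntersecting (w : ι → List Bool) : Prop :=
  ∀ p q, p ≠ q → visited (A p) (w p) ∩ visited (A q) (w q) = ∅

def swapTails (τ : Equiv.Perm ι) (w : ι → List Bool) (t : ℕ) : ι → List Bool :=
  fun r => (w r).take t ++ (w (τ r)).drop t

variable {A} {c : ℤ} {m : ℕ} {w : ι → List Bool}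

lemma track_min_length (hw : ∀ r, (w r).length = m) (t : ℕ) :
    track A w (min t m) = track A w t := by
  ext1 r
  simp only [track, ← hw r, ← List.take_eq_take_min]

lemma nonIntersecting_iff_injective_track (hA : ∀ p, (A p).1 + (A p).2 = c)
    (hw : ∀ r, (w r).length = m) : NonIntersecting A w ↔ ∀ t, Injective (track A w t) := by
  simp only [NonIntersecting, ← Set.not_nonempty_iff_eq_empty,
    visited_inter_nonempty_iff ((hA _).trans (hA _).symm), hw]
  constructor
  · intro h t p q hpq
    by_contra hne
    rw [← track_min_length hw] at hpq
    exact h p q hne ⟨min t m, min_le_right t m, min_le_right t m, hpq⟩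
  · rintro h p q hne ⟨t, -, -, hpq⟩
    exact hne (h t hpq)

lemma firstCollisionTime_track_le (hw : ∀ r, (w r).length = m)
    (h : ∃ t, ¬ Injective (track A w t)) : firstCollisionTime (track A w) ≤ m := by
  obtain ⟨t, ht⟩ := h
  rw [← track_min_length hw] at ht
  exact (firstCollisionTime_le ht).trans (min_le_right t m)

lemma endpoint_swapTails {τ : Equiv.Perm ι} {t : ℕ} {r : ι}
    (hr : track A w t r = track A w t (τ r)) :
    endpoint (A r) (swapTails τ w t r) = endpoint (A (τ r)) (w (τ r)) := by
  have hr' : endpoint (A r) ((w r).take t) = endpoint (A (τ r)) ((w (τ r)).take t) := hr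
  rw [swapTails, endpoint_append, hr', ← endpoint_append, List.take_append_drop]

lemma track_swapTails (τ : Equiv.Perm ι) {s t : ℕ} (hst : s ≤ t) (hw : ∀ r, t ≤ (w r).length) :
    track A (swapTails τ w t) s = track A w s := by
  ext1 r
  have hlen : s ≤ ((w r).take t).length := by simpa using ⟨hst, hst.trans (hw r)⟩
  simp only [track, swapTails, List.take_append_of_le_length hlen, List.take_take,
    min_eq_left hst]

lemma swapTails_swapTails {τ : Equiv.Perm ι} (hτ : Involutive τ) {t : ℕ}
    (hw : ∀ r, t ≤ (w r).length) : swapTails τ (swapTails τ w t) t = w := by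
  ext1 r
  have hlen : ∀ r, ((w r).take t).length = t := fun r => by simpa using hw r
  simp only [swapTails, List.take_left' (hlen _), List.drop_left' (hlen _), hτ r,
    List.take_append_drop]

end Tracks

section TailSwap

variable {ι : Type*} [DecidableEq ι] (A : ι → ℤ × ℤ)

/-- The colliding pair is read off from the positions at the first collision time alone. Swapping
tails after that time leaves all earlier positions unchanged, so applying `tailSwap` again makes
the same choice and undoes the swap. -/
noncomputable def tailSwap (x : Σ _ : Equiv.Perm ι, ι → List Bool) :
    Σ _ : Equiv.Perm ι, ι → List Bool :=
  let t := firstCollisionTime (track A x.2)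
  let τ := collisionSwap (track A x.2 t)
  ⟨x.1 * τ, swapTails τ x.2 t⟩

variable {A} {m : ℕ} {σ : Equiv.Perm ι} {w : ι → List Bool}

lemma track_tailSwap (hw : ∀ r, (w r).length = m) (h : ∃ t, ¬ Injective (track A w t)) {s : ℕ}
    (hs : s ≤ firstCollisionTime (track A w)) : track A (tailSwap A ⟨σ, w⟩).2 s = track A w s :=
  track_swapTails _ hs fun r => (hw r).symm ▸ firstCollisionTime_track_le hw h

lemma tailSwap_tailSwap (hw : ∀ r, (w r).length = m) (h : ∃ t, ¬ Injective (track A w t)) :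
    tailSwap A (tailSwap A ⟨σ, w⟩) = ⟨σ, w⟩ := by
  have htime : firstCollisionTime (track A (tailSwap A ⟨σ, w⟩).2) =
      firstCollisionTime (track A w) :=
    firstCollisionTime_congr h fun s hs => track_tailSwap hw h hs
  set t := firstCollisionTime (track A w)
  set τ := collisionSwap (track A w t)
  have hswap : collisionSwap (track A (tailSwap A ⟨σ, w⟩).2 t) = τ := by
    rw [track_tailSwap hw h le_rfl]
  have hτ : τ * τ = 1 := Equiv.ext (collisionSwap_involutive _)
  conv_lhs => rw [tailSwap, htime, hswap]
  change (⟨σ * τ * τ, swapTails τ (swapTails τ w t) t⟩ : Σ _ : Equiv.Perm ι, ι → List Bool) = _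
  rw [mul_assoc, hτ, mul_one, swapTails_swapTails (collisionSwap_involutive _)
    fun r => (hw r).symm ▸ firstCollisionTime_track_le hw h]

end TailSwap

section Systems

variable {ι : Type*} [Fintype ι] [DecidableEq ι] (A B : ι → ℤ × ℤ) (m : ℕ)

def pathSystems (σ : Equiv.Perm ι) : Finset (ι → List Bool) :=
  Fintype.piFinset fun p => paths m (A p) (B (σ p))

variable {A B m} {c : ℤ} {σ : Equiv.Perm ι} {w : ι → List Bool}

lemma length_of_mem_pathSystems (hw : w ∈ pathSystems A B m σ) (r : ι) : (w r).length = m :=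
  mem_words.1 (mem_filter.1 (Fintype.mem_piFinset.1 hw r)).1

lemma mem_pathSystems (hA : ∀ p, (A p).1 + (A p).2 = c) (hB : ∀ q, (B q).1 + (B q).2 = c + m) :
    w ∈ pathSystems A B m σ ↔ ∀ p, endpoint (A p) (w p) = B (σ p) := by
  simp only [pathSystems, Fintype.mem_piFinset]
  exact forall_congr' fun p => mem_paths (by rw [hA, hB])

lemma card_pathSystems (hA : ∀ p, (A p).1 + (A p).2 = c) (hB : ∀ q, (B q).1 + (B q).2 = c + m) :
    (#(pathSystems A B m σ) : ℤ) = ∏ p, pathNum (A p) (B (σ p)) := by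
  simp only [pathSystems, Fintype.card_piFinset, Nat.cast_prod]
  exact prod_congr rfl fun p _ => card_paths (by rw [hA, hB])

lemma sign_tailSwap (h : ∃ t, ¬ Injective (track A w t)) :
    Equiv.Perm.sign (tailSwap A ⟨σ, w⟩).1 = -Equiv.Perm.sign σ := by
  obtain ⟨p, q, -, hpq, hswap⟩ := collisionSwap_spec (not_injective_firstCollisionTime h)
  simp only [tailSwap, hswap, Equiv.Perm.sign_mul, Equiv.Perm.sign_swap hpq, mul_neg, mul_one]

lemma tailSwap_mem_pathSystems (hA : ∀ p, (A p).1 + (A p).2 = c)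
    (hB : ∀ q, (B q).1 + (B q).2 = c + m) (hw : w ∈ pathSystems A B m σ) :
    (tailSwap A ⟨σ, w⟩).2 ∈ pathSystems A B m (tailSwap A ⟨σ, w⟩).1 := by
  refine (mem_pathSystems hA hB).2 fun r => ?_
  rw [tailSwap, endpoint_swapTails (apply_collisionSwap _ r).symm, (mem_pathSystems hA hB).1 hw]
  rfl

lemma exists_not_injective_track (hA : ∀ p, (A p).1 + (A p).2 = c)
    (hw : w ∈ pathSystems A B m σ) (hni : ¬ NonIntersecting A w) :
    ∃ t, ¬ Injective (track A w t) := by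
  simpa [nonIntersecting_iff_injective_track hA (length_of_mem_pathSystems hw)] using hni

open Classical in
lemma sum_sign_intersecting_eq_zero (hA : ∀ p, (A p).1 + (A p).2 = c)
    (hB : ∀ q, (B q).1 + (B q).2 = c + m) :
    ∑ x ∈ univ.sigma fun σ => {w ∈ pathSystems A B m σ | ¬ NonIntersecting A w},
      (Equiv.Perm.sign x.1 : ℤ) = 0 := by
  have hmem : ∀ x ∈ univ.sigma fun σ => {w ∈ pathSystems A B m σ | ¬ NonIntersecting A w},
      x.2 ∈ pathSystems A B m x.1 ∧ ∃ t, ¬ Injective (track A x.2 t) := fun x hx => by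
    simp only [mem_sigma, mem_univ, true_and, mem_filter] at hx
    exact ⟨hx.1, exists_not_injective_track hA hx.1 hx.2⟩
  have hsign : ∀ x ∈ univ.sigma fun σ => {w ∈ pathSystems A B m σ | ¬ NonIntersecting A w},
      (Equiv.Perm.sign x.1 : ℤ) + Equiv.Perm.sign (tailSwap A x).1 = 0 := fun x hx => by
    rw [sign_tailSwap (hmem _ hx).2, Units.val_neg, add_neg_cancel]
  refine sum_involution (fun x _ => tailSwap A x) hsign (fun x hx _ hfix => ?_) (fun x hx => ?_)
    fun x hx => tailSwap_tailSwap (length_of_mem_pathSystems (hmem _ hx).1) (hmem _ hx).2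
  · have hneg := sign_tailSwap (σ := x.1) (hmem _ hx).2
    rw [hfix] at hneg
    exact units_ne_neg_self _ hneg
  · obtain ⟨σ, w⟩ := x
    obtain ⟨hw, t, ht⟩ := hmem _ hx
    have hw' := tailSwap_mem_pathSystems hA hB hw
    simp only [mem_sigma, mem_univ, true_and, mem_filter]
    refine ⟨hw', fun hni => ?_⟩
    rw [nonIntersecting_iff_injective_track hA (length_of_mem_pathSystems hw')] at hni
    apply not_injective_firstCollisionTime ⟨t, ht⟩
    rw [← track_tailSwap (σ := σ) (length_of_mem_pathSystems hw) ⟨t, ht⟩ le_rfl]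
    exact hni _

end Systems

section Ordered

variable {ι : Type*} [Fintype ι] [LinearOrder ι] {A B : ι → ℤ × ℤ} {m : ℕ} {c : ℤ}

lemma eq_one_of_nonIntersecting {σ : Equiv.Perm ι} {w : ι → List Bool}
    (hA : ∀ p, (A p).1 + (A p).2 = c) (hB : ∀ q, (B q).1 + (B q).2 = c + m)
    (hAmono : StrictMono fun p => (A p).1) (hBmono : StrictMono fun q => (B q).1) (hw : w ∈ pathSystems A B m σ)
    (hni : NonIntersecting A w) : σ = 1 := by
  have hlen := length_of_mem_pathSystems hw
  have hinj := (nonIntersecting_iff_injective_track hA hlen).1 hni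
  suffices hmono : StrictMono σ from Equiv.ext (congrFun hmono.eq_id)
  intro p q hpq
  by_contra! hle
  obtain ⟨t, -, ht⟩ := exists_endpoint_take_eq_of_cross ((hA p).trans (hA q).symm)
    ((hlen p).trans (hlen q).symm) (hAmono hpq).le (by
      rw [(mem_pathSystems hA hB).1 hw, (mem_pathSystems hA hB).1 hw]; exact hBmono.monotone hle)
  exact hpq.ne (hinj t ht)

open Classical in
theorem card_nonIntersecting_eq_det (hA : ∀ p, (A p).1 + (A p).2 = c)
    (hB : ∀ q, (B q).1 + (B q).2 = c + m) (hAmono : StrictMono fun p => (A p).1)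
    (hBmono : StrictMono fun q => (B q).1) :
    (#{w ∈ pathSystems A B m 1 | NonIntersecting A w} : ℤ) =
      (Matrix.of fun p q => pathNum (A p) (B q)).det := by
  have hsplit : ∀ σ : Equiv.Perm ι, (#(pathSystems A B m σ) : ℤ) =
      #{w ∈ pathSystems A B m σ | NonIntersecting A w} +
        #{w ∈ pathSystems A B m σ | ¬ NonIntersecting A w} := fun σ => by
    rw [← Nat.cast_add, card_filter_add_card_filter_not]
  have hempty : ∀ σ ≠ 1, {w ∈ pathSystems A B m σ | NonIntersecting A w} = ∅ := fun σ hσ =>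
    filter_false_of_mem fun w hw hni => hσ (eq_one_of_nonIntersecting hA hB hAmono hBmono hw hni)
  calc (#{w ∈ pathSystems A B m 1 | NonIntersecting A w} : ℤ)
      = ∑ σ : Equiv.Perm ι,
          (Equiv.Perm.sign σ : ℤ) * #{w ∈ pathSystems A B m σ | NonIntersecting A w} := by
        rw [sum_eq_single 1 (fun σ _ hσ => by simp [hempty σ hσ]) (by simp)]
        simp
    _ = ∑ σ : Equiv.Perm ι, (Equiv.Perm.sign σ : ℤ) * (#(pathSystems A B m σ) : ℤ) := by
        simp only [hsplit, mul_add, sum_add_distrib, left_eq_add]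
        simpa [sum_sigma, mul_comm] using sum_sign_intersecting_eq_zero hA hB
    _ = (Matrix.of fun p q => pathNum (A p) (B q)).det := by
        rw [← Matrix.det_transpose, Matrix.det_apply]
        simp [card_pathSystems hA hB, Units.smul_def]

end Ordered

end UprightPath

open UprightPath in
/-- Lindström–Gessel–Viennot in the `3 × 3` case for the points
`A₁=(-1,1), A₂=(0,0), A₃=(1,-1)` and `B₁=(i-1,j+1), B₂=(i,j), B₃=(i+1,j-1)`:
any pairwise non-intersecting triple joining the `A`'s to the `B`'s connects
`A_p` to `B_p` for each `p`, and the number of such triples is `det M` where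
`M p q` counts upright paths from `A_p` to `B_q`. -/
theorem lgv_three_by_three (i j : ℕ) :
    let A : Fin 3 → ℤ × ℤ := ![((-1 : ℤ), (1 : ℤ)), ((0 : ℤ), (0 : ℤ)), ((1 : ℤ), (-1 : ℤ))]
    let B : Fin 3 → ℤ × ℤ :=
      ![((i : ℤ) - 1, (j : ℤ) + 1), ((i : ℤ), (j : ℤ)), ((i : ℤ) + 1, (j : ℤ) - 1)]
    (∀ w : Fin 3 → List Bool,
        (∃ σ : Equiv.Perm (Fin 3), ∀ p, endpoint (A p) (w p) = B (σ p)) →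
        (∀ p q, p ≠ q → visited (A p) (w p) ∩ visited (A q) (w q) = ∅) →
        ∀ p, endpoint (A p) (w p) = B p) ∧
      ({w : Fin 3 → List Bool |
          (∀ p, endpoint (A p) (w p) = B p) ∧
          (∀ p q, p ≠ q → visited (A p) (w p) ∩ visited (A q) (w q) = ∅)}.ncard : ℤ) =
        Matrix.det (Matrix.of fun p q : Fin 3 => pathNum (A p) (B q)) := by
  intro A B
  have hA : ∀ p, (A p).1 + (A p).2 = 0 := by decide
  have hB : ∀ q, (B q).1 + (B q).2 = 0 + ↑(i + j) := fun q => by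
    fin_cases q <;> simp [B]
  have hAmono : StrictMono fun p => (A p).1 := by
    simp [StrictMono, Fin.forall_fin_succ, A]
  have hBmono : StrictMono fun q => (B q).1 := by
    simp [StrictMono, Fin.forall_fin_succ, B]
  refine ⟨fun w ⟨σ, hσ⟩ hni => ?_, ?_⟩
  · obtain rfl := eq_one_of_nonIntersecting hA hB hAmono hBmono ((mem_pathSystems hA hB).2 hσ) hni
    exact hσ
  · classical
    rw [← card_nonIntersecting_eq_det hA hB hAmono hBmono, ← Set.ncard_coe_finset]
    congr 2
    ext w
    rw [mem_coe, mem_filter, mem_pathSystems hA hB]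
    rfl
end

section
/- The number of non-crossing pairs of Dyck paths of length 2n (pairs (P,Q) of Dyck paths with P weakly below Q at every abscissa) equals C_n·C_{n+2} − C_{n+1}², where C_n is the n-th Catalan number. -/
/-!
Prepending `UU` and appending `DD` to the upper path turns a non-crossing pair `(P, Q)` into a
pair `(C, D)` of Dyck paths of semilengths `n` and `n + 2` such that `D`, translated two steps to
the left, stays strictly above `C` on `[0, 2n]`. The other pairs of semilengths `(n, n + 2)`
are those where the translated `D` meets `C` at some abscissa in `[0, 2n]`; exchanging the tails
after the first meeting point (the Lindström–Gessel–Viennot involution) maps them bijectively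
onto the `C_{n+1}²` pairs of Dyck paths of semilength `n + 1`.
-/

/-- Height after `x` steps of a path with steps `(1,1)` (`true`) and `(1,-1)` (`false`). -/
def height (w : List Bool) (x : ℕ) : ℤ :=
  ((w.take x).count true : ℤ) - ((w.take x).count false : ℤ)

/-- `w` is a Dyck path of length `2n`: `n` up steps, `n` down steps, never below the axis. -/
def IsDyck (n : ℕ) (w : List Bool) : Prop :=
  w.length = 2 * n ∧ w.count true = n ∧ ∀ x : ℕ, 0 ≤ height w x

section Height

variable (w : List Bool)

@[simp] lemma height_zero : height w 0 = 0 := by simp [height]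

lemma height_of_length_le {x : ℕ} (h : w.length ≤ x) : height w x = height w w.length := by
  simp [height, List.take_of_length_le h]

lemma height_length : height w w.length = 2 * (w.count true : ℤ) - w.length := by
  have := w.count_true_add_count_false
  simp only [height, List.take_length]
  omega

lemma height_append (v : List Bool) (x : ℕ) :
    height (w ++ v) x = height w x + height v (x - w.length) := by
  simp only [height, List.take_append, List.count_append]
  push_cast; ring

lemma height_take (k x : ℕ) : height (w.take k) x = height w (min x k) := by
  simp [height, List.take_take]

lemma height_drop (k x : ℕ) : height (w.drop k) x = height w (k + x) - height w k := by
  simp only [height, List.take_add, List.count_append]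
  push_cast; ring

lemma height_cons_succ (b : Bool) (x : ℕ) :
    height (b :: w) (x + 1) = (bif b then 1 else -1) + height w x := by
  cases b <;> simp [height] <;> ring

lemma abs_height_one_le : |height w 1| ≤ 1 := by
  cases w with
  | nil => simp [height]
  | cons b v => cases b <;> simp [height_cons_succ v _ 0]

lemma abs_height_succ_sub_le (x : ℕ) : |height w (x + 1) - height w x| ≤ 1 := by
  rw [← height_drop]
  exact abs_height_one_le _

lemma even_height_add {x : ℕ} (hx : x ≤ w.length) : Even (height w x + x) := by
  have := (w.take x).count_true_add_count_false
  have hl : (w.take x).length = x := by simp [hx]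
  exact ⟨(w.take x).count true, by simp only [height]; omega⟩

end Height

namespace IsDyck

variable {n : ℕ} {w : List Bool}

lemma length_eq (h : IsDyck n w) : w.length = 2 * n := h.1

lemma height_nonneg (h : IsDyck n w) (x : ℕ) : 0 ≤ height w x := h.2.2 x

lemma height_eq_zero (h : IsDyck n w) {x : ℕ} (hx : 2 * n ≤ x) : height w x = 0 := by
  rw [height_of_length_le w (h.1 ▸ hx), height_length, h.1, h.2.1]
  push_cast; ring

end IsDyck

lemma isDyck_iff {n : ℕ} {w : List Bool} :
    IsDyck n w ↔ w.length = 2 * n ∧ height w (2 * n) = 0 ∧ ∀ x ≤ 2 * n, 0 ≤ height w x := by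
  refine ⟨fun h => ⟨h.length_eq, h.height_eq_zero le_rfl, fun x _ => h.height_nonneg x⟩, ?_⟩
  rintro ⟨hl, he, hnn⟩
  have hend := height_length w
  rw [hl, he] at hend
  refine ⟨hl, by omega, fun x => ?_⟩
  rcases le_total x (2 * n) with hx | hx
  · exact hnn x hx
  · rw [height_of_length_le w (hl ▸ hx), hl, he]

def nest (w : List Bool) : List Bool := true :: (w ++ [false])

lemma nest_injective : Function.Injective nest := fun _ _ h => by simpa [nest] using h

lemma height_nest_succ (w : List Bool) {x : ℕ} (hx : x ≤ w.length) :
    height (nest w) (x + 1) = height w x + 1 := by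
  rw [nest, height_cons_succ, height_append, Nat.sub_eq_zero_of_le hx, height_zero]
  simp only [cond_true]; ring

lemma isDyck_nest {n : ℕ} {w : List Bool} (h : IsDyck n w) : IsDyck (n + 1) (nest w) := by
  have hl : (nest w).length = 2 * (n + 1) := by simp [nest, h.length_eq]; ring
  have hend : height (nest w) (2 * (n + 1)) = 0 := by
    rw [← hl, height_length, hl]
    simp [nest, h.2.1]
  refine isDyck_iff.2 ⟨hl, hend, fun x hx => ?_⟩
  rcases x with _ | x
  · simp
  rcases le_or_gt x w.length with hx' | hx'
  · rw [height_nest_succ w hx']; linarith [h.height_nonneg x]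
  · rw [h.length_eq] at hx'
    rw [show x + 1 = 2 * (n + 1) by omega, hend]

lemma IsDyck.exists_nest_eq {m : ℕ} {D : List Bool} (hD : IsDyck (m + 1) D)
    (hpos : ∀ x, 1 ≤ x → x ≤ 2 * m + 1 → 0 < height D x) : ∃ Q, IsDyck m Q ∧ nest Q = D := by
  obtain ⟨a, R, rfl⟩ := List.exists_cons_of_length_pos (by rw [hD.length_eq]; omega)
  obtain ⟨Q, b, rfl⟩ := (List.eq_nil_or_concat R).resolve_left
    (by rintro rfl; have := hD.length_eq; simp at this; omega)
  simp only [List.concat_eq_append] at hD hpos ⊢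
  have hQ : Q.length = 2 * m := by have := hD.length_eq; simp at this; omega
  have h1 := hpos 1 le_rfl (by omega)
  rw [height_cons_succ _ _ 0, height_zero] at h1
  obtain rfl : a = true := by cases a <;> simp_all
  have hmid : height (true :: (Q ++ [b])) (2 * m + 1) = 1 + height Q (2 * m) := by
    rw [height_cons_succ, height_append, hQ, Nat.sub_self, height_zero]
    simp
  have hend : height (true :: (Q ++ [b])) (2 * m + 2) =
      1 + height Q (2 * m) + (bif b then 1 else -1) := by
    rw [height_cons_succ, height_append, height_of_length_le Q (by omega), hQ,
      show 2 * m + 1 - 2 * m = 1 by omega]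
    cases b <;> simp [height]; ring
  have hmpos := hpos (2 * m + 1) (by omega) le_rfl
  rw [hmid] at hmpos
  rw [hD.height_eq_zero (by omega)] at hend
  obtain rfl : b = false := by
    cases b
    · rfl
    · simp at hend; omega
  refine ⟨Q, isDyck_iff.2 ⟨hQ, by simp at hend; omega, fun x hx => ?_⟩, rfl⟩
  have := hpos (x + 1) (by omega) (by omega)
  rw [← nest, height_nest_succ Q (by omega)] at this
  omega

lemma height_nest_nest (Q : List Bool) {x : ℕ} (hx : x ≤ Q.length) :
    height (nest (nest Q)) (x + 2) = height Q x + 2 := by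
  rw [height_nest_succ _ (by simp [nest]; omega), height_nest_succ _ hx]; ring

lemma IsDyck.exists_nest_nest_eq {n : ℕ} {C D : List Bool} (hC : IsDyck n C)
    (hD : IsDyck (n + 2) D) (hsep : ∀ x ≤ 2 * n, height C x + 2 ≤ height D (x + 2)) :
    ∃ Q, IsDyck n Q ∧ (∀ x ≤ 2 * n, height C x ≤ height Q x) ∧ nest (nest Q) = D := by
  have hmid : ∀ x, 2 ≤ x → x ≤ 2 * n + 2 → 2 ≤ height D x := fun x h h' => by
    obtain ⟨y, rfl⟩ := Nat.exists_eq_add_of_le' h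
    linarith [hsep y (by omega), hC.height_nonneg y]
  obtain ⟨D', hD', rfl⟩ := hD.exists_nest_eq fun x h h' => by
    have hfirst := abs_le.mp (abs_height_succ_sub_le D 1)
    have hlast := abs_le.mp (abs_height_succ_sub_le D (2 * n + 2))
    have := hmid 2 le_rfl (by omega)
    have := hmid (2 * n + 2) (by omega) le_rfl
    rcases (by omega : x = 1 ∨ x = 2 * n + 3 ∨ 2 ≤ x ∧ x ≤ 2 * n + 2) with rfl | rfl | ⟨h, h'⟩
    · linarith
    · linarith
    · linarith [hmid x h h']
  obtain ⟨Q, hQ, rfl⟩ := hD'.exists_nest_eq fun x h h' => by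
    have := hmid (x + 1) (by omega) (by omega)
    rw [height_nest_succ _ (by rw [hD'.length_eq]; omega)] at this
    omega
  refine ⟨Q, hQ, fun x hx => ?_, rfl⟩
  have := hsep x hx
  rw [height_nest_nest Q (by rw [hQ.length_eq]; exact hx)] at this
  omega

section TailSwap

/-- Abscissas where `C` meets `D` translated two steps to the left. -/
def meetSet (C D : List Bool) : Set ℕ := {x | height D (x + 2) = height C x}

noncomputable def firstMeet (C D : List Bool) : ℕ := sInf (meetSet C D)

def swapFst (C D : List Bool) (k : ℕ) : List Bool := C.take k ++ D.drop (k + 2)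

def swapSnd (C D : List Bool) (k : ℕ) : List Bool := D.take (k + 2) ++ C.drop k

noncomputable def tailSwap : List Bool × List Bool → List Bool × List Bool
  | (C, D) => (swapFst C D (firstMeet C D), swapSnd C D (firstMeet C D))

variable {C D : List Bool} {k x : ℕ}

lemma height_swapFst_of_le (hk : k ≤ C.length) (hx : x ≤ k) :
    height (swapFst C D k) x = height C x := by
  simp [swapFst, height_append, height_take, min_eq_left hk, min_eq_left hx,
    Nat.sub_eq_zero_of_le hx]

lemma height_swapFst_of_ge (hk : k ≤ C.length) (hm : k ∈ meetSet C D) (hx : k ≤ x) :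
    height (swapFst C D k) x = height D (x + 2) := by
  replace hm : height D (k + 2) = height C k := hm
  rw [swapFst, height_append, height_take, height_drop, List.length_take, min_eq_left hk,
    min_eq_right hx, hm, show k + 2 + (x - k) = x + 2 by omega]
  ring

lemma height_swapSnd_of_le (hk : k + 2 ≤ D.length) (hx : x ≤ k + 2) :
    height (swapSnd C D k) x = height D x := by
  simp [swapSnd, height_append, height_take, min_eq_left hk, min_eq_left hx,
    Nat.sub_eq_zero_of_le hx]

lemma height_swapSnd_of_ge (hk : k + 2 ≤ D.length) (hm : k ∈ meetSet C D) (hx : k + 2 ≤ x) :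
    height (swapSnd C D k) x = height C (x - 2) := by
  replace hm : height D (k + 2) = height C k := hm
  rw [swapSnd, height_append, height_take, height_drop, List.length_take, min_eq_left hk,
    min_eq_right hx, hm, show k + (x - (k + 2)) = x - 2 by omega]
  ring

lemma swapFst_swap (hk₁ : k ≤ C.length) (hk₂ : k + 2 ≤ D.length) :
    swapFst (swapFst C D k) (swapSnd C D k) k = C := by
  simp [swapFst, swapSnd, min_eq_left hk₁, min_eq_left hk₂]

lemma swapSnd_swap (hk₁ : k ≤ C.length) (hk₂ : k + 2 ≤ D.length) :
    swapSnd (swapFst C D k) (swapSnd C D k) k = D := by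
  simp [swapFst, swapSnd, min_eq_left hk₁, min_eq_left hk₂]

lemma mem_meetSet_swap_iff (hk₁ : k ≤ C.length) (hk₂ : k + 2 ≤ D.length) (hx : x ≤ k) :
    x ∈ meetSet (swapFst C D k) (swapSnd C D k) ↔ x ∈ meetSet C D := by
  change height _ (x + 2) = height _ x ↔ height D (x + 2) = height C x
  rw [height_swapFst_of_le hk₁ hx, height_swapSnd_of_le hk₂ (by omega)]

lemma firstMeet_swap (hm : firstMeet C D ∈ meetSet C D) (hk₁ : firstMeet C D ≤ C.length)
    (hk₂ : firstMeet C D + 2 ≤ D.length) :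
    firstMeet (swapFst C D (firstMeet C D)) (swapSnd C D (firstMeet C D)) = firstMeet C D := by
  have hk := (mem_meetSet_swap_iff hk₁ hk₂ le_rfl).2 hm
  have hle : firstMeet _ _ ≤ firstMeet C D := Nat.sInf_le hk
  exact hle.antisymm <| Nat.sInf_le <| (mem_meetSet_swap_iff hk₁ hk₂ hle).1 <| Nat.sInf_mem ⟨_, hk⟩

lemma tailSwap_tailSwap (hm : firstMeet C D ∈ meetSet C D) (hk₁ : firstMeet C D ≤ C.length)
    (hk₂ : firstMeet C D + 2 ≤ D.length) : tailSwap (tailSwap (C, D)) = (C, D) := by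
  simp only [tailSwap, firstMeet_swap hm hk₁ hk₂, swapFst_swap hk₁ hk₂, swapSnd_swap hk₁ hk₂]

lemma IsDyck.swapFst {a c : ℕ} (hC : IsDyck a C) (hD : IsDyck (c + 1) D) (hm : k ∈ meetSet C D)
    (ha : k ≤ 2 * a) (hc : k ≤ 2 * c) : IsDyck c (swapFst C D k) := by
  have hk : k ≤ C.length := hC.length_eq ▸ ha
  refine isDyck_iff.2 ⟨?_, ?_, fun x _ => ?_⟩
  · simp [_root_.swapFst, hC.length_eq, hD.length_eq]; omega
  · rw [height_swapFst_of_ge hk hm hc, hD.height_eq_zero (by omega)]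
  · rcases le_total x k with hx | hx
    · rw [height_swapFst_of_le hk hx]; exact hC.height_nonneg x
    · rw [height_swapFst_of_ge hk hm hx]; exact hD.height_nonneg _

lemma IsDyck.swapSnd {a c : ℕ} (hC : IsDyck a C) (hD : IsDyck (c + 1) D) (hm : k ∈ meetSet C D)
    (ha : k ≤ 2 * a) (hc : k ≤ 2 * c) : IsDyck (a + 1) (swapSnd C D k) := by
  have hk : k + 2 ≤ D.length := by rw [hD.length_eq]; omega
  refine isDyck_iff.2 ⟨?_, ?_, fun x _ => ?_⟩
  · simp [_root_.swapSnd, hC.length_eq, hD.length_eq]; omega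
  · rw [height_swapSnd_of_ge hk hm (by omega), hC.height_eq_zero (by omega)]
  · rcases le_total x (k + 2) with hx | hx
    · rw [height_swapSnd_of_le hk hx]; exact hD.height_nonneg x
    · rw [height_swapSnd_of_ge hk hm hx]; exact hC.height_nonneg _

/-- The gap between `D` shifted left and `C` is even and moves by at most two per step,
so starting nonnegative and never vanishing it stays at least two. -/
lemma height_add_two_le_of_forall_notMem_meetSet {N : ℕ} (hD : 0 ≤ height D 2)
    (hC : N ≤ C.length) (hDN : N + 2 ≤ D.length) (hne : ∀ x ≤ N, x ∉ meetSet C D) :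
    ∀ x ≤ N, height C x + 2 ≤ height D (x + 2) := by
  have heven : ∀ x ≤ N, Even (height D (x + 2) - height C x) := fun x hx => by
    obtain ⟨r, hr⟩ := even_height_add D (x := x + 2) (by omega)
    obtain ⟨s, hs⟩ := even_height_add C (x := x) (by omega)
    exact ⟨r - s - 1, by push_cast at hr; omega⟩
  have hgap : ∀ x ≤ N, height D (x + 2) - height C x ≠ 0 := fun x hx h =>
    hne x hx (sub_eq_zero.1 h)
  intro x hx
  induction x with
  | zero =>
    obtain ⟨r, hr⟩ := heven 0 hx
    have := hgap 0 hx
    simp only [height_zero, zero_add, sub_zero] at hr this ⊢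
    omega
  | succ x ih =>
    obtain ⟨r, hr⟩ := heven (x + 1) hx
    have := hgap (x + 1) hx
    have := ih (by omega)
    have hDstep : |height D (x + 1 + 2) - height D (x + 2)| ≤ 1 :=
      abs_height_succ_sub_le D (x + 2)
    have hCstep := abs_height_succ_sub_le C x
    rw [abs_le] at hDstep hCstep
    omega

lemma IsDyck.firstMeet_mem_meetSet {a : ℕ} (hC : IsDyck a C) (hD : IsDyck (a + 2) D) :
    firstMeet C D ∈ meetSet C D :=
  Nat.sInf_mem ⟨2 * a + 2,
    (hD.height_eq_zero (by omega)).trans (hC.height_eq_zero (by omega)).symm⟩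

lemma separated_iff_lt_firstMeet {n : ℕ} (hC : IsDyck n C) (hD : IsDyck (n + 2) D) :
    (∀ x ≤ 2 * n, height C x + 2 ≤ height D (x + 2)) ↔ 2 * n < firstMeet C D := by
  refine ⟨fun hsep => ?_, fun hlt => ?_⟩
  · by_contra! hle
    have hm : height D (firstMeet C D + 2) = height C (firstMeet C D) :=
      hC.firstMeet_mem_meetSet hD
    linarith [hsep _ hle]
  · exact height_add_two_le_of_forall_notMem_meetSet (hD.height_nonneg 2)
      (by rw [hC.length_eq]) (by rw [hD.length_eq]; omega)
      fun x hx => Nat.notMem_of_lt_sInf (by unfold firstMeet at hlt; omega)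

lemma exists_mem_meetSet_le {n : ℕ} (hC : IsDyck (n + 1) C) (hD : IsDyck (n + 1) D) :
    ∃ x ≤ 2 * n, x ∈ meetSet C D := by
  by_contra! hne
  have := height_add_two_le_of_forall_notMem_meetSet (hD.height_nonneg 2)
    (by rw [hC.length_eq]; omega) (by rw [hD.length_eq]; omega) hne (2 * n) le_rfl
  linarith [hC.height_nonneg (2 * n), hD.height_eq_zero (x := 2 * n + 2) (by omega)]

end TailSwap

section Counting

open DyckStep

def DyckStep.equivBool : DyckStep ≃ Bool where
  toFun
    | U => true
    | D => false
  invFun b := bif b then U else D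
  left_inv s := by cases s <;> rfl
  right_inv b := by cases b <;> rfl

lemma count_map_equivBool (l : List DyckStep) (s : DyckStep) :
    (l.map equivBool).count (equivBool s) = l.count s :=
  List.count_map_of_injective _ _ equivBool.injective _

lemma isDyck_map_equivBool_iff {m : ℕ} (l : List DyckStep) :
    IsDyck m (l.map equivBool) ↔
      l.count U = m ∧ l.count U = l.count D ∧ ∀ i, (l.take i).count D ≤ (l.take i).count U := by
  have hcount (l : List DyckStep) : (l.map equivBool).count true = l.count U ∧
      (l.map equivBool).count false = l.count D :=
    ⟨count_map_equivBool l U, count_map_equivBool l D⟩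
  have hlen := (l.map equivBool).count_true_add_count_false
  simp only [IsDyck, height, ← List.map_take, (hcount _).1, (hcount _).2, List.length_map] at hlen ⊢
  refine ⟨fun ⟨h1, h2, h3⟩ => ⟨h2, by omega, fun i => by have := h3 i; omega⟩,
    fun ⟨h1, h2, h3⟩ => ⟨by omega, h1, fun i => by have := h3 i; omega⟩⟩

lemma ncard_setOf_isDyck (m : ℕ) : {w | IsDyck m w}.ncard = catalan m := by
  have hrange : Set.range (fun p : {p : DyckWord // p.semilength = m} => p.1.toList.map equivBool)
      = {w | IsDyck m w} := by
    ext w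
    constructor
    · rintro ⟨⟨p, rfl⟩, rfl⟩
      exact (isDyck_map_equivBool_iff _).2 ⟨rfl, p.count_U_eq_count_D, p.count_D_le_count_U⟩
    · intro hw
      obtain ⟨hm, hUD, hDU⟩ :=
        (isDyck_map_equivBool_iff (w.map equivBool.symm)).1 (by simpa [List.map_map] using hw)
      exact ⟨⟨⟨w.map equivBool.symm, hUD, hDU⟩, hm⟩, by simp [List.map_map]⟩
  rw [← hrange, Set.ncard_range_of_injective, Nat.card_eq_fintype_card,
    DyckWord.card_dyckWord_semilength_eq_catalan]
  intro p q h
  exact Subtype.ext (DyckWord.ext (List.map_injective_iff.2 equivBool.injective h))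

end Counting

lemma setOf_isDyck_finite (m : ℕ) : {w | IsDyck m w}.Finite :=
  (List.finite_length_eq Bool (2 * m)).subset fun _ hw => hw.1

def dyckPairs (a b : ℕ) : Set (List Bool × List Bool) := {w | IsDyck a w} ×ˢ {w | IsDyck b w}

lemma dyckPairs_finite (a b : ℕ) : (dyckPairs a b).Finite :=
  (setOf_isDyck_finite a).prod (setOf_isDyck_finite b)

lemma ncard_dyckPairs (a b : ℕ) : (dyckPairs a b).ncard = catalan a * catalan b := by
  rw [dyckPairs, Set.ncard_prod, ncard_setOf_isDyck, ncard_setOf_isDyck]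

def noncrossingPairs (n : ℕ) : Set (List Bool × List Bool) :=
  {PQ | IsDyck n PQ.1 ∧ IsDyck n PQ.2 ∧ ∀ x ≤ 2 * n, height PQ.1 x ≤ height PQ.2 x}

def meetingPairs (n : ℕ) : Set (List Bool × List Bool) :=
  {p ∈ dyckPairs n (n + 2) | firstMeet p.1 p.2 ≤ 2 * n}

lemma tailSwap_bijOn (n : ℕ) :
    Set.BijOn tailSwap (meetingPairs n) (dyckPairs (n + 1) (n + 1)) := by
  have hmeeting : ∀ p ∈ meetingPairs n, tailSwap p ∈ dyckPairs (n + 1) (n + 1) ∧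
      tailSwap (tailSwap p) = p := by
    rintro ⟨C, D⟩ ⟨⟨hC, hD⟩, hk : firstMeet C D ≤ 2 * n⟩
    have hm := hC.firstMeet_mem_meetSet hD
    refine ⟨⟨hC.swapFst hD hm hk (by omega), hC.swapSnd hD hm hk (by omega)⟩,
      tailSwap_tailSwap hm (by rw [hC.length_eq]; exact hk) (by rw [hD.length_eq]; omega)⟩
  have hpairs : ∀ p ∈ dyckPairs (n + 1) (n + 1), tailSwap p ∈ meetingPairs n ∧
      tailSwap (tailSwap p) = p := by
    rintro ⟨C, D⟩ ⟨hC, hD⟩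
    obtain ⟨x, hx, hmx⟩ := exists_mem_meetSet_le hC hD
    have hm : firstMeet C D ∈ meetSet C D := Nat.sInf_mem ⟨x, hmx⟩
    have hk : firstMeet C D ≤ 2 * n := (Nat.sInf_le hmx).trans hx
    have hk₁ : firstMeet C D ≤ C.length := by rw [hC.length_eq]; omega
    have hk₂ : firstMeet C D + 2 ≤ D.length := by rw [hD.length_eq]; omega
    refine ⟨⟨⟨hC.swapFst (c := n) hD hm (by omega) hk, hC.swapSnd hD hm (by omega) hk⟩, ?_⟩,
      tailSwap_tailSwap hm hk₁ hk₂⟩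
    change firstMeet (swapFst C D _) (swapSnd C D _) ≤ 2 * n
    rw [firstMeet_swap hm hk₁ hk₂]
    exact hk
  exact Set.InvOn.bijOn ⟨fun p hp => (hmeeting p hp).2, fun p hp => (hpairs p hp).2⟩
    (fun p hp => (hmeeting p hp).1) (fun p hp => (hpairs p hp).1)

lemma image_noncrossing_eq (n : ℕ) :
    Prod.map id (nest ∘ nest) '' noncrossingPairs n = dyckPairs n (n + 2) \ meetingPairs n := by
  ext ⟨C, D⟩
  constructor
  · rintro ⟨⟨P, Q⟩, ⟨hP : IsDyck n P, hQ : IsDyck n Q, hPQ⟩, h⟩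
    obtain ⟨rfl, rfl⟩ := Prod.ext_iff.1 h
    have hD : IsDyck (n + 2) (nest (nest Q)) := isDyck_nest (isDyck_nest hQ)
    refine ⟨⟨hP, hD⟩, ?_⟩
    rintro ⟨-, hle : firstMeet P (nest (nest Q)) ≤ 2 * n⟩
    have hsep : ∀ x ≤ 2 * n, height P x + 2 ≤ height (nest (nest Q)) (x + 2) := fun x hx => by
      rw [height_nest_nest Q (hQ.length_eq ▸ hx)]
      linarith [hPQ x hx]
    have := (separated_iff_lt_firstMeet hP hD).1 hsep
    omega
  · rintro ⟨⟨hC, hD⟩, hfar⟩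
    have hlt : 2 * n < firstMeet C D := by
      by_contra! h
      exact hfar ⟨⟨hC, hD⟩, h⟩
    obtain ⟨Q, hQ, hCQ, rfl⟩ :=
      hC.exists_nest_nest_eq hD ((separated_iff_lt_firstMeet hC hD).2 hlt)
    exact ⟨(C, Q), ⟨hC, hQ, hCQ⟩, rfl⟩

/-- The number of non-crossing pairs of Dyck paths of length `2n` (`P` weakly below
`Q` at every abscissa) is `C_n C_{n+2} - C_{n+1}²`. -/
theorem count_noncrossing_dyck_pairs (n : ℕ) :
    ({PQ : List Bool × List Bool |
        IsDyck n PQ.1 ∧ IsDyck n PQ.2 ∧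
        ∀ x : ℕ, x ≤ 2 * n → height PQ.1 x ≤ height PQ.2 x}.ncard : ℤ) =
      (catalan n : ℤ) * (catalan (n+2)) - (catalan (n+1))^2 := by
  change ((noncrossingPairs n).ncard : ℤ) = _
  have hsub : meetingPairs n ⊆ dyckPairs n (n + 2) := Set.sep_subset _ _
  have hsplit := Set.ncard_sdiff_add_ncard_of_subset hsub (dyckPairs_finite _ _)
  rw [(tailSwap_bijOn n).ncard_eq, ncard_dyckPairs, ncard_dyckPairs] at hsplit
  have hinj : Function.Injective (Prod.map (id : List Bool → List Bool) (nest ∘ nest)) :=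
    Function.injective_id.prodMap (nest_injective.comp nest_injective)
  rw [← Set.ncard_image_of_injective _ hinj, image_noncrossing_eq]
  zify at hsplit
  linear_combination hsplit
end
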